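/- arXiv:1701.07497 — 7 statements merged into one kernel-verified Lean document; each statement's English description precedes it below -/
import Mathlib

section
/- Let λ be a strict partition and k ≥ 1. Partition the residues modulo k into classes: c₀ = {0}, the classes c_i = {i, k−i} for 1 ≤ i < k/2, and, if k is even, c_{k/2} = {k/2}; for each class c let λ^{(c)} be the strict partition consisting of the parts of λ whose residue mod k lies in c. Then every k-abacus move on λ changes only parts with residues in a single class, every maximal move sequence from λ^{(c)} has the same length N_c, every maximal move sequence from λ has length N = Σ_c N_c, and the number of maximal move sequences from λ equals the multinomial coefficient N!/∏_c N_c! times the product over all classes c of the number of maximal move sequences from λ^{(c)}. -/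
/-- A strict partition as a finite set of distinct positive integers. -/
def IsStrictPartitionM (s : Finset ℕ) : Prop := ∀ x ∈ s, 0 < x

/-- The `k`-abacus moves: (I) replace a part `p > k` by `p - k` when `p - k` is not a part;
(Ia) delete a part equal to `k`; (II) delete two distinct parts summing to `k`. -/
def AbacusMove (k : ℕ) (mu nu : Finset ℕ) : Prop :=
  (∃ p ∈ mu, k < p ∧ p - k ∉ mu ∧ nu = insert (p - k) (mu.erase p)) ∨
  (k ∈ mu ∧ nu = mu.erase k) ∨
  (∃ a ∈ mu, ∃ b ∈ mu, a ≠ b ∧ a + b = k ∧ nu = (mu.erase a).erase b)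

/-- The parts of `lam` whose residue mod `k` lies in the class `{i, k - i}`
(for `0 ≤ i ≤ k/2`; note `(k - 0) % k = 0`). -/
def clsPart (k i : ℕ) (lam : Finset ℕ) : Finset ℕ :=
  lam.filter (fun p => p % k = i ∨ p % k = (k - i) % k)

/-- A maximal sequence of `k`-abacus moves of length `n` starting at `start`. -/
def IsMaxMoveSeq (k : ℕ) (start : Finset ℕ) (n : ℕ) (f : ℕ → Finset ℕ) : Prop :=
  f 0 = start ∧ (∀ j < n, AbacusMove k (f j) (f (j + 1))) ∧ ¬∃ x, AbacusMove k (f n) x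

/-- Maximal move sequences of length `n` from `start`, frozen after step `n`
(so that they form a finite type and can be counted). -/
def MaxMoveSeq (k : ℕ) (start : Finset ℕ) (n : ℕ) : Type :=
  {f : ℕ → Finset ℕ // IsMaxMoveSeq k start n f ∧ ∀ i, n ≤ i → f i = f n}

namespace Stmt9

/-- the class of a residue -/
def clsF (k p : ℕ) : ℕ := if p % k ≤ k / 2 then p % k else k - p % k

variable {k : ℕ}

lemma clsF_le (hk : 1 ≤ k) (p : ℕ) : clsF k p ≤ k / 2 := by
  have hr : p % k < k := Nat.mod_lt _ hk
  unfold clsF; split <;> omega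

lemma pred_iff_clsF (hk : 1 ≤ k) {i : ℕ} (hi : i ≤ k / 2) (p : ℕ) :
    (p % k = i ∨ p % k = (k - i) % k) ↔ clsF k p = i := by
  have hr : p % k < k := Nat.mod_lt _ hk
  have h1 : (k - i) % k = if i = 0 then 0 else k - i := by
    split
    · simp_all
    · exact Nat.mod_eq_of_lt (by omega)
  unfold clsF
  rw [h1]
  split_ifs with h2 h3 h3 <;> omega

lemma mem_clsPart_iff (hk : 1 ≤ k) {i : ℕ} (hi : i ≤ k / 2) {p : ℕ} {s : Finset ℕ} :
    p ∈ clsPart k i s ↔ p ∈ s ∧ clsF k p = i := by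
  simp only [clsPart, Finset.mem_filter, pred_iff_clsF hk hi]

lemma clsPart_eq_filter (hk : 1 ≤ k) {i : ℕ} (hi : i ≤ k / 2) (s : Finset ℕ) :
    clsPart k i s = s.filter (fun p => clsF k p = i) := by
  ext p; simp [mem_clsPart_iff hk hi, Finset.mem_filter]

lemma clsPart_subset (k i : ℕ) (s : Finset ℕ) : clsPart k i s ⊆ s := Finset.filter_subset _ _

lemma clsF_sub (hp : k < p) : clsF k (p - k) = clsF k p := by
  have : p % k = (p - k) % k := by
    conv_lhs => rw [show p = (p - k) + k by omega]
    rw [Nat.add_mod_right]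
  unfold clsF; rw [this]

lemma clsF_k : clsF k k = 0 := by unfold clsF; simp

lemma clsF_pair {a b : ℕ} (hab : a + b = k) : clsF k a = clsF k b := by
  rcases Nat.eq_zero_or_pos a with ha | ha
  · subst ha; simp at hab; subst hab; rw [clsF_k]; unfold clsF; simp
  rcases Nat.eq_zero_or_pos b with hb | hb
  · subst hb; simp at hab; subst hab; rw [clsF_k]; unfold clsF; simp
  have ha' : a % k = a := Nat.mod_eq_of_lt (by omega)
  have hb' : b % k = b := Nat.mod_eq_of_lt (by omega)
  unfold clsF; rw [ha', hb']; split_ifs <;> omega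

lemma clsPart_insert_eq (hk : 1 ≤ k) {i : ℕ} (hi : i ≤ k / 2) {x : ℕ} (h : clsF k x = i)
    (s : Finset ℕ) : clsPart k i (insert x s) = insert x (clsPart k i s) := by
  rw [clsPart_eq_filter hk hi, clsPart_eq_filter hk hi, Finset.filter_insert, if_pos h]

lemma clsPart_insert_ne (hk : 1 ≤ k) {i : ℕ} (hi : i ≤ k / 2) {x : ℕ} (h : clsF k x ≠ i)
    (s : Finset ℕ) : clsPart k i (insert x s) = clsPart k i s := by
  rw [clsPart_eq_filter hk hi, clsPart_eq_filter hk hi, Finset.filter_insert, if_neg h]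

lemma clsPart_erase (k i x : ℕ) (s : Finset ℕ) :
    clsPart k i (s.erase x) = (clsPart k i s).erase x := by
  unfold clsPart; rw [Finset.filter_erase]

lemma clsPart_erase_ne (hk : 1 ≤ k) {i : ℕ} (hi : i ≤ k / 2) {x : ℕ} (h : clsF k x ≠ i)
    (s : Finset ℕ) : clsPart k i (s.erase x) = clsPart k i s := by
  rw [clsPart_erase]
  apply Finset.erase_eq_of_notMem
  rw [mem_clsPart_iff hk hi]; tauto

lemma clsPart_ext (hk : 1 ≤ k) {s t : Finset ℕ}
    (h : ∀ j ≤ k / 2, clsPart k j s = clsPart k j t) : s = t := by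
  ext x
  have h1 := h (clsF k x) (clsF_le hk x)
  constructor <;> intro hx
  · have : x ∈ clsPart k (clsF k x) s := (mem_clsPart_iff hk (clsF_le hk x)).2 ⟨hx, rfl⟩
    rw [h1] at this
    exact clsPart_subset _ _ _ this
  · have : x ∈ clsPart k (clsF k x) t := (mem_clsPart_iff hk (clsF_le hk x)).2 ⟨hx, rfl⟩
    rw [← h1] at this
    exact clsPart_subset _ _ _ this

/-- moves decrease the sum by exactly `k` -/
lemma move_sum {mu nu : Finset ℕ} (h : AbacusMove k mu nu) :
    nu.sum id + k = mu.sum id := by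
  rcases h with ⟨p, hp, hkp, hpk, rfl⟩ | ⟨hkmem, rfl⟩ | ⟨a, ha, b, hb, hab, habk, rfl⟩
  · rw [Finset.sum_insert (fun hc => hpk (Finset.erase_subset _ _ hc))]
    have := Finset.add_sum_erase mu id hp
    simp only [id] at *
    omega
  · have := Finset.add_sum_erase mu id hkmem
    simp only [id] at *
    omega
  · have hb' : b ∈ mu.erase a := Finset.mem_erase.2 ⟨fun hc => hab (hc.symm), hb⟩
    have h1 := Finset.add_sum_erase (mu.erase a) id hb'
    have h2 := Finset.add_sum_erase mu id ha
    simp only [id] at *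
    omega

lemma move_strict {mu nu : Finset ℕ} (h : AbacusMove k mu nu) (hmu : IsStrictPartitionM mu) :
    IsStrictPartitionM nu := by
  rcases h with ⟨p, hp, hkp, hpk, rfl⟩ | ⟨hkmem, rfl⟩ | ⟨a, ha, b, hb, hab, habk, rfl⟩
  · intro x hx
    rcases Finset.mem_insert.1 hx with rfl | hx
    · omega
    · exact hmu x (Finset.erase_subset _ _ hx)
  · exact fun x hx => hmu x (Finset.erase_subset _ _ hx)
  · exact fun x hx => hmu x (Finset.erase_subset _ _ (Finset.erase_subset _ _ hx))

lemma strict_clsPart {s : Finset ℕ} (hs : IsStrictPartitionM s) (i : ℕ) :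
    IsStrictPartitionM (clsPart k i s) := fun x hx => hs x (clsPart_subset _ _ _ hx)

/-- projection: a move happens in a single class `c`; it induces a move on `clsPart c`
and leaves the other classes unchanged. -/
lemma move_project (hk : 1 ≤ k) {mu nu : Finset ℕ} (h : AbacusMove k mu nu) :
    ∃ c ≤ k / 2,
      (∀ p ∈ (mu \ nu) ∪ (nu \ mu), clsF k p = c) ∧
      (∀ j ≤ k / 2, j ≠ c → clsPart k j nu = clsPart k j mu) ∧
      AbacusMove k (clsPart k c mu) (clsPart k c nu) := by
  rcases h with ⟨p, hp, hkp, hpk, rfl⟩ | ⟨hkmem, rfl⟩ | ⟨a, ha, b, hb, hab, habk, rfl⟩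
  · refine ⟨clsF k p, clsF_le hk p, ?_, ?_, ?_⟩
    · intro q hq
      rcases Finset.mem_union.1 hq with hq | hq
      · obtain ⟨hq1, hq2⟩ := Finset.mem_sdiff.1 hq
        have : q = p := by
          by_contra hne
          exact hq2 (Finset.mem_insert.2 (Or.inr (Finset.mem_erase.2 ⟨hne, hq1⟩)))
        rw [this]
      · obtain ⟨hq1, hq2⟩ := Finset.mem_sdiff.1 hq
        rcases Finset.mem_insert.1 hq1 with rfl | hq1
        · exact clsF_sub hkp
        · exact absurd (Finset.erase_subset _ _ hq1) hq2
    · intro j hj hjne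
      rw [clsPart_insert_ne hk hj (by rw [clsF_sub hkp]; exact fun hc => hjne hc.symm),
        clsPart_erase_ne hk hj (fun hc => hjne hc.symm)]
    · left
      have hc := clsF_le hk p
      refine ⟨p, (mem_clsPart_iff hk hc).2 ⟨hp, rfl⟩, hkp,
        fun hc' => hpk (clsPart_subset _ _ _ hc'), ?_⟩
      rw [clsPart_insert_eq hk hc (clsF_sub hkp), clsPart_erase]
  · refine ⟨0, Nat.zero_le _, ?_, ?_, ?_⟩
    · intro q hq
      rcases Finset.mem_union.1 hq with hq | hq
      · obtain ⟨hq1, hq2⟩ := Finset.mem_sdiff.1 hq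
        have : q = k := by
          by_contra hne
          exact hq2 (Finset.mem_erase.2 ⟨hne, hq1⟩)
        rw [this, clsF_k]
      · obtain ⟨hq1, hq2⟩ := Finset.mem_sdiff.1 hq
        exact absurd (Finset.erase_subset _ _ hq1) hq2
    · intro j hj hjne
      exact clsPart_erase_ne hk hj (by rw [clsF_k]; exact fun hc => hjne hc.symm) _
    · right; left
      refine ⟨(mem_clsPart_iff hk (Nat.zero_le _)).2 ⟨hkmem, clsF_k⟩, ?_⟩
      rw [clsPart_erase]
  · have hcab : clsF k a = clsF k b := clsF_pair habk
    refine ⟨clsF k a, clsF_le hk a, ?_, ?_, ?_⟩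
    · intro q hq
      rcases Finset.mem_union.1 hq with hq | hq
      · obtain ⟨hq1, hq2⟩ := Finset.mem_sdiff.1 hq
        have : q = a ∨ q = b := by
          by_contra hne
          push_neg at hne
          exact hq2 (Finset.mem_erase.2 ⟨hne.2, Finset.mem_erase.2 ⟨hne.1, hq1⟩⟩)
        rcases this with rfl | rfl
        · rfl
        · exact hcab.symm
      · obtain ⟨hq1, hq2⟩ := Finset.mem_sdiff.1 hq
        exact absurd (Finset.erase_subset _ _ (Finset.erase_subset _ _ hq1)) hq2
    · intro j hj hjne
      rw [clsPart_erase_ne hk hj (by rw [← hcab]; exact fun hc => hjne hc.symm),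
        clsPart_erase_ne hk hj (fun hc => hjne hc.symm)]
    · right; right
      have hc := clsF_le hk a
      refine ⟨a, (mem_clsPart_iff hk hc).2 ⟨ha, rfl⟩, b,
        (mem_clsPart_iff hk hc).2 ⟨hb, hcab.symm⟩, hab, habk, ?_⟩
      rw [clsPart_erase, clsPart_erase]

/-- moves never fix the partition -/
lemma move_ne {mu nu : Finset ℕ} (h : AbacusMove k mu nu) : mu ≠ nu := by
  rcases h with ⟨p, hp, hkp, hpk, rfl⟩ | ⟨hkmem, rfl⟩ | ⟨a, ha, b, hb, hab, habk, rfl⟩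
  · intro hc
    exact hpk (hc ▸ Finset.mem_insert_self _ _)
  · intro hc
    exact Finset.notMem_erase k mu (hc ▸ hkmem)
  · intro hc
    have : a ∈ (mu.erase a).erase b := hc ▸ ha
    exact Finset.notMem_erase a mu (Finset.erase_subset _ _ this)

/-- lift: a move on a class part lifts to a move on the whole partition, fixing
the other classes. -/
lemma move_lift (hk : 1 ≤ k) {i : ℕ} (hi : i ≤ k / 2) {mu t : Finset ℕ}
    (h : AbacusMove k (clsPart k i mu) t) :
    ∃ nu, AbacusMove k mu nu ∧ clsPart k i nu = t ∧
      ∀ j ≤ k / 2, j ≠ i → clsPart k j nu = clsPart k j mu := by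
  rcases h with ⟨p, hp, hkp, hpk, rfl⟩ | ⟨hkmem, rfl⟩ | ⟨a, ha, b, hb, hab, habk, rfl⟩
  · obtain ⟨hpmu, hpc⟩ := (mem_clsPart_iff hk hi).1 hp
    have hpk' : p - k ∉ mu := fun hc =>
      hpk ((mem_clsPart_iff hk hi).2 ⟨hc, by rw [clsF_sub hkp, hpc]⟩)
    refine ⟨insert (p - k) (mu.erase p), Or.inl ⟨p, hpmu, hkp, hpk', rfl⟩, ?_, ?_⟩
    · rw [clsPart_insert_eq hk hi (by rw [clsF_sub hkp, hpc]), clsPart_erase]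
    · intro j hj hjne
      rw [clsPart_insert_ne hk hj (by rw [clsF_sub hkp, hpc]; exact fun hc => hjne hc.symm),
        clsPart_erase_ne hk hj (by rw [hpc]; exact fun hc => hjne hc.symm)]
  · obtain ⟨hkmu, hkc⟩ := (mem_clsPart_iff hk hi).1 hkmem
    have hi0 : i = 0 := by rw [← hkc, clsF_k]
    subst hi0
    refine ⟨mu.erase k, Or.inr (Or.inl ⟨hkmu, rfl⟩), ?_, ?_⟩
    · rw [clsPart_erase]
    · intro j hj hjne
      exact clsPart_erase_ne hk hj (by rw [clsF_k]; exact fun hc => hjne hc.symm) _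
  · obtain ⟨hamu, hac⟩ := (mem_clsPart_iff hk hi).1 ha
    obtain ⟨hbmu, hbc⟩ := (mem_clsPart_iff hk hi).1 hb
    refine ⟨(mu.erase a).erase b, Or.inr (Or.inr ⟨a, hamu, b, hbmu, hab, habk, rfl⟩), ?_, ?_⟩
    · rw [clsPart_erase, clsPart_erase]
    · intro j hj hjne
      rw [clsPart_erase_ne hk hj (by rw [hbc]; exact fun hc => hjne hc.symm),
        clsPart_erase_ne hk hj (by rw [hac]; exact fun hc => hjne hc.symm)]

/-- if the whole partition admits no move, neither does any class part -/
lemma noMove_clsPart (hk : 1 ≤ k) {i : ℕ} (hi : i ≤ k / 2) {mu : Finset ℕ}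
    (h : ¬∃ x, AbacusMove k mu x) : ¬∃ x, AbacusMove k (clsPart k i mu) x := by
  rintro ⟨t, ht⟩
  obtain ⟨nu, hnu, -⟩ := move_lift hk hi ht
  exact h ⟨nu, hnu⟩

/-- classes with given class are unchanged or moved -/
lemma move_cls (hk : 1 ≤ k) {i : ℕ} (hi : i ≤ k / 2) {mu nu : Finset ℕ}
    (h : AbacusMove k mu nu) :
    clsPart k i nu = clsPart k i mu ∨ AbacusMove k (clsPart k i mu) (clsPart k i nu) := by
  obtain ⟨c, hc, -, hothers, hmove⟩ := move_project hk h
  by_cases hic : i = c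
  · subst hic; exact Or.inr hmove
  · exact Or.inl (hothers i hi hic)

lemma sum_clsPart (hk : 1 ≤ k) (mu : Finset ℕ) :
    ∑ i ∈ Finset.Icc 0 (k / 2), (clsPart k i mu).sum id = mu.sum id := by
  have : ∀ i ∈ Finset.Icc 0 (k / 2), (clsPart k i mu).sum id
      = ∑ p ∈ mu.filter (fun p => clsF k p = i), p := by
    intro i hi
    rw [clsPart_eq_filter hk (Finset.mem_Icc.1 hi).2]
    rfl
  rw [Finset.sum_congr rfl this]
  rw [Finset.sum_fiberwise_of_maps_to (fun p _ => Finset.mem_Icc.2 ⟨Nat.zero_le _, clsF_le hk p⟩)]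
  rfl


section Diamond

variable {mu nu1 nu2 : Finset ℕ}

/-- erase commutes (4-fold) -/
private lemma erase4 (s : Finset ℕ) (a b a' b' : ℕ) :
    (((s.erase a').erase b').erase a).erase b = (((s.erase a).erase b).erase a').erase b' := by
  ext x; simp only [Finset.mem_erase]; tauto

private lemma erase3 (s : Finset ℕ) (a b p : ℕ) :
    ((s.erase a).erase b).erase p = ((s.erase p).erase a).erase b := by
  ext x; simp only [Finset.mem_erase]; tauto

/-- diamond, case (I, I) -/
private lemma dII {p q : ℕ} (hp : p ∈ mu) (hkp : k < p) (hpk : p - k ∉ mu)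
    (hq : q ∈ mu) (hkq : k < q) (hqk : q - k ∉ mu) (hpq : p ≠ q) :
    ∃ c, AbacusMove k (insert (p - k) (mu.erase p)) c ∧
         AbacusMove k (insert (q - k) (mu.erase q)) c := by
  have h1 : q - k ≠ p - k := by omega
  have h2 : q ≠ p - k := fun hc => hpk (hc ▸ hq)
  have h3 : p ≠ q - k := fun hc => hqk (hc ▸ hp)
  refine ⟨insert (q - k) (insert (p - k) ((mu.erase p).erase q)), ?_, ?_⟩
  · left
    refine ⟨q, Finset.mem_insert_of_mem (Finset.mem_erase.2 ⟨hpq.symm, hq⟩), hkq, ?_, ?_⟩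
    · simp only [Finset.mem_insert, Finset.mem_erase, not_or]
      exact ⟨h1, fun hc => hqk hc.2⟩
    · rw [Finset.erase_insert_of_ne h2.symm]
  · left
    refine ⟨p, Finset.mem_insert_of_mem (Finset.mem_erase.2 ⟨hpq, hp⟩), hkp, ?_, ?_⟩
    · simp only [Finset.mem_insert, Finset.mem_erase, not_or]
      exact ⟨h1.symm ∘ Eq.symm ∘ Eq.symm, fun hc => hpk hc.2⟩
    · rw [Finset.erase_insert_of_ne h3.symm]
      ext x; simp only [Finset.mem_insert, Finset.mem_erase]; tauto

/-- diamond, case (I, Ia) -/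
private lemma dIIa {p : ℕ} (hp : p ∈ mu) (hkp : k < p) (hpk : p - k ∉ mu) (hkm : k ∈ mu) :
    ∃ c, AbacusMove k (insert (p - k) (mu.erase p)) c ∧ AbacusMove k (mu.erase k) c := by
  have h1 : p - k ≠ k := fun hc => hpk (by rw [hc]; exact hkm)
  have h2 : p ≠ k := by omega
  refine ⟨insert (p - k) ((mu.erase p).erase k), ?_, ?_⟩
  · right; left
    constructor
    · exact Finset.mem_insert_of_mem (Finset.mem_erase.2 ⟨h2.symm, hkm⟩)
    · rw [Finset.erase_insert_of_ne h1]
  · left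
    refine ⟨p, Finset.mem_erase.2 ⟨h2, hp⟩, hkp, ?_, ?_⟩
    · exact fun hc => hpk (Finset.erase_subset _ _ hc)
    · ext x; simp only [Finset.mem_insert, Finset.mem_erase]; tauto

/-- diamond, case (I, II) -/
private lemma dI2 {p a b : ℕ} (hp : p ∈ mu) (hkp : k < p) (hpk : p - k ∉ mu)
    (ha : a ∈ mu) (hb : b ∈ mu) (hab : a ≠ b) (habk : a + b = k) (hmu : IsStrictPartitionM mu) :
    ∃ c, AbacusMove k (insert (p - k) (mu.erase p)) c ∧
         AbacusMove k ((mu.erase a).erase b) c := by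
  have ha0 : 0 < a := hmu a ha
  have hb0 : 0 < b := hmu b hb
  have hpa : p ≠ a := by omega
  have hpb : p ≠ b := by omega
  have h1 : a ≠ p - k := fun hc => hpk (hc ▸ ha)
  have h2 : b ≠ p - k := fun hc => hpk (hc ▸ hb)
  refine ⟨insert (p - k) (((mu.erase p).erase a).erase b), ?_, ?_⟩
  · right; right
    refine ⟨a, Finset.mem_insert_of_mem (Finset.mem_erase.2 ⟨hpa.symm, ha⟩),
      b, Finset.mem_insert_of_mem (Finset.mem_erase.2 ⟨hpb.symm, hb⟩), hab, habk, ?_⟩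
    rw [Finset.erase_insert_of_ne h1.symm, Finset.erase_insert_of_ne h2.symm]
  · left
    refine ⟨p, Finset.mem_erase.2 ⟨hpb, Finset.mem_erase.2 ⟨hpa, hp⟩⟩, hkp, ?_, ?_⟩
    · exact fun hc => hpk (Finset.erase_subset _ _ (Finset.erase_subset _ _ hc))
    · ext x; simp only [Finset.mem_insert, Finset.mem_erase]; tauto

/-- diamond, case (Ia, II) -/
private lemma dIa2 {a b : ℕ} (hkm : k ∈ mu)
    (ha : a ∈ mu) (hb : b ∈ mu) (hab : a ≠ b) (habk : a + b = k) (hmu : IsStrictPartitionM mu) :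
    ∃ c, AbacusMove k (mu.erase k) c ∧ AbacusMove k ((mu.erase a).erase b) c := by
  have ha0 : 0 < a := hmu a ha
  have hb0 : 0 < b := hmu b hb
  have hak : a ≠ k := by omega
  have hbk : b ≠ k := by omega
  refine ⟨((mu.erase k).erase a).erase b, ?_, ?_⟩
  · right; right
    exact ⟨a, Finset.mem_erase.2 ⟨hak, ha⟩, b, Finset.mem_erase.2 ⟨hbk, hb⟩, hab, habk, rfl⟩
  · right; left
    constructor
    · exact Finset.mem_erase.2 ⟨hbk.symm, Finset.mem_erase.2 ⟨hak.symm, hkm⟩⟩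
    · ext x; simp only [Finset.mem_erase]; tauto

/-- diamond, case (II, II) -/
private lemma d22 {a b a' b' : ℕ} (ha : a ∈ mu) (hb : b ∈ mu) (hab : a ≠ b) (habk : a + b = k)
    (ha' : a' ∈ mu) (hb' : b' ∈ mu) (hab' : a' ≠ b') (habk' : a' + b' = k)
    (hne : ((mu.erase a).erase b) ≠ ((mu.erase a').erase b')) :
    ∃ c, AbacusMove k ((mu.erase a).erase b) c ∧ AbacusMove k ((mu.erase a').erase b') c := by
  have hdisj : a ≠ a' ∧ a ≠ b' ∧ b ≠ a' ∧ b ≠ b' := by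
    by_contra hcon
    apply hne
    have : (a = a' ∧ b = b') ∨ (a = b' ∧ b = a') := by omega
    rcases this with ⟨rfl, rfl⟩ | ⟨rfl, rfl⟩
    · rfl
    · ext x; simp only [Finset.mem_erase]; tauto
  obtain ⟨d1, d2, d3, d4⟩ := hdisj
  refine ⟨(((mu.erase a).erase b).erase a').erase b', ?_, ?_⟩
  · right; right
    exact ⟨a', Finset.mem_erase.2 ⟨d3.symm, Finset.mem_erase.2 ⟨d1.symm, ha'⟩⟩,
      b', Finset.mem_erase.2 ⟨d4.symm, Finset.mem_erase.2 ⟨d2.symm, hb'⟩⟩, hab', habk', rfl⟩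
  · right; right
    refine ⟨a, Finset.mem_erase.2 ⟨d2, Finset.mem_erase.2 ⟨d1, ha⟩⟩,
      b, Finset.mem_erase.2 ⟨d4, Finset.mem_erase.2 ⟨d3, hb⟩⟩, hab, habk, ?_⟩
    rw [erase4]

/-- the diamond lemma: two distinct moves can be joined in one step each -/
lemma diamond (hmu : IsStrictPartitionM mu) (h1 : AbacusMove k mu nu1)
    (h2 : AbacusMove k mu nu2) (hne : nu1 ≠ nu2) :
    ∃ c, AbacusMove k nu1 c ∧ AbacusMove k nu2 c := by
  rcases h1 with ⟨p, hp, hkp, hpk, rfl⟩ | ⟨hkm, rfl⟩ | ⟨a, ha, b, hb, hab, habk, rfl⟩ <;>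
    rcases h2 with ⟨q, hq, hkq, hqk, rfl⟩ | ⟨hkm', rfl⟩ | ⟨a', ha', b', hb', hab', habk', rfl⟩
  · exact dII hp hkp hpk hq hkq hqk (fun hc => hne (by rw [hc]))
  · exact dIIa hp hkp hpk hkm'
  · exact dI2 hp hkp hpk ha' hb' hab' habk' hmu
  · obtain ⟨c, hc1, hc2⟩ := dIIa hq hkq hqk hkm
    exact ⟨c, hc2, hc1⟩
  · exact absurd rfl hne
  · exact dIa2 hkm ha' hb' hab' habk' hmu
  · obtain ⟨c, hc1, hc2⟩ := dI2 hq hkq hqk ha hb hab habk hmu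
    exact ⟨c, hc2, hc1⟩
  · obtain ⟨c, hc1, hc2⟩ := dIa2 hkm' ha hb hab habk hmu
    exact ⟨c, hc2, hc1⟩
  · exact d22 ha hb hab habk ha' hb' hab' habk' hne

end Diamond

section Seq

variable {mu : Finset ℕ}

/-- shift a maximal sequence -/
lemma seq_shift {n : ℕ} {f : ℕ → Finset ℕ} (h : IsMaxMoveSeq k mu (n + 1) f) :
    IsMaxMoveSeq k (f 1) n (fun j => f (j + 1)) := by
  obtain ⟨h0, hmv, hnm⟩ := h
  exact ⟨rfl, fun j hj => hmv (j + 1) (by omega), hnm⟩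

/-- prepend a move to a maximal sequence -/
lemma seq_prepend {nu : Finset ℕ} {m : ℕ} {g : ℕ → Finset ℕ} (hmv : AbacusMove k mu nu)
    (hg : IsMaxMoveSeq k nu m g) :
    IsMaxMoveSeq k mu (m + 1) (fun j => match j with | 0 => mu | j + 1 => g j) := by
  obtain ⟨h0, hmvs, hnm⟩ := hg
  refine ⟨rfl, ?_, hnm⟩
  intro j hj
  match j with
  | 0 => simpa [h0] using hmv
  | j + 1 => exact hmvs j (by omega)

/-- there is a maximal move sequence from any strict partition -/
lemma exists_max (hk : 1 ≤ k) :
    ∀ N mu, Finset.sum mu id ≤ N → IsStrictPartitionM mu →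
      ∃ n f, IsMaxMoveSeq k mu n f := by
  intro N
  induction N with
  | zero =>
    intro mu hsum hmu
    refine ⟨0, fun _ => mu, rfl, by omega, ?_⟩
    rintro ⟨nu, hnu⟩
    have : Finset.sum nu id + k = Finset.sum mu id := move_sum hnu
    omega
  | succ N ih =>
    intro mu hsum hmu
    by_cases hmv : ∃ nu, AbacusMove k mu nu
    · obtain ⟨nu, hnu⟩ := hmv
      have hs := move_sum hnu
      obtain ⟨m, g, hg⟩ := ih nu (by omega) (move_strict hnu hmu)
      exact ⟨m + 1, _, seq_prepend hnu hg⟩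
    · exact ⟨0, fun _ => mu, rfl, by omega, hmv⟩

/-- the chain of a sequence -/
lemma seq_chain {n : ℕ} {f : ℕ → Finset ℕ} (h : IsMaxMoveSeq k mu n f) :
    Relation.ReflTransGen (AbacusMove k) mu (f n) := by
  obtain ⟨h0, hmv, -⟩ := h
  subst h0
  have : ∀ j ≤ n, Relation.ReflTransGen (AbacusMove k) (f 0) (f j) := by
    intro j
    induction j with
    | zero => intro _; exact Relation.ReflTransGen.refl
    | succ j ih =>
      intro hj
      exact Relation.ReflTransGen.tail (ih (by omega)) (hmv j (by omega))
  exact this n le_rfl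

/-- master lemma: all maximal move sequences from `mu` end at the unique normal form
reachable from `mu`, and their length is determined. -/
lemma master (hk : 1 ≤ k) :
    ∀ N mu, Finset.sum mu id ≤ N → IsStrictPartitionM mu →
      ∀ s, Relation.ReflTransGen (AbacusMove k) mu s → (¬∃ x, AbacusMove k s x) →
      ∀ n f, IsMaxMoveSeq k mu n f → f n = s ∧ k * n + Finset.sum s id = Finset.sum mu id := by
  intro N
  induction N with
  | zero =>
    intro mu hsum hmu s hchain hsnm n f hf
    -- mu has no moves since sum is 0
    have hnm : ¬∃ x, AbacusMove k mu x := by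
      rintro ⟨nu, hnu⟩; have := move_sum hnu; omega
    have hmus : mu = s := by
      rcases Relation.ReflTransGen.cases_head hchain with h | ⟨t, ht, -⟩
      · exact h
      · exact absurd ⟨t, ht⟩ hnm
    obtain ⟨h0, hmv, hfn⟩ := hf
    have hn0 : n = 0 := by
      by_contra hn
      exact hnm ⟨f 1, h0 ▸ hmv 0 (by omega)⟩
    subst hn0
    exact ⟨h0.trans hmus, by rw [← hmus]; omega⟩
  | succ N ih =>
    intro mu hsum hmu s hchain hsnm n f hf
    by_cases hnm : ∃ x, AbacusMove k mu x
    · -- mu is not normal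
      obtain ⟨t, ht, htchain⟩ : ∃ t, AbacusMove k mu t ∧
          Relation.ReflTransGen (AbacusMove k) t s := by
        rcases Relation.ReflTransGen.cases_head hchain with h | h
        · subst h; exact absurd hnm hsnm
        · exact h
      have hts : Finset.sum t id + k = Finset.sum mu id := move_sum ht
      obtain ⟨h0, hmv, hfnm⟩ := hf
      have hn : n ≠ 0 := by
        rintro rfl
        exact (h0 ▸ hfnm) hnm
      obtain ⟨n', rfl⟩ : ∃ n', n = n' + 1 := ⟨n - 1, by omega⟩
      have hshift := seq_shift ⟨h0, hmv, hfnm⟩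
      have hmv1 : AbacusMove k mu (f 1) := h0 ▸ hmv 0 (by omega)
      have hsum1 : Finset.sum (f 1) id + k = Finset.sum mu id := move_sum hmv1
      have hmul : k * (n' + 1) = k * n' + k := by ring
      by_cases hft : f 1 = t
      · rw [hft] at hshift hsum1
        obtain ⟨hfin, hlen⟩ := ih t (by omega) (move_strict ht hmu) s htchain hsnm n'
          (fun j => f (j + 1)) hshift
        exact ⟨hfin, by omega⟩
      · -- use the diamond
        obtain ⟨c, hc1, hc2⟩ := diamond hmu hmv1 ht hft
        have hcstrict : IsStrictPartitionM c := move_strict hc2 (move_strict ht hmu)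
        obtain ⟨m, g, hg⟩ := exists_max hk (Finset.sum c id) c le_rfl hcstrict
        -- prepend to t
        have hgt := seq_prepend hc2 hg
        obtain ⟨hgfin, hglen⟩ := ih t (by omega) (move_strict ht hmu) s htchain hsnm (m + 1)
          _ hgt
        -- hence g m = s (the prepended sequence ends at g m)
        have hgm : g m = s := hgfin
        -- chain from f 1 to s via c
        have hchain1 : Relation.ReflTransGen (AbacusMove k) (f 1) s := by
          refine Relation.ReflTransGen.head hc1 ?_
          rw [← hgm]
          exact seq_chain hg
        obtain ⟨hfin, hlen⟩ := ih (f 1) (by omega) (move_strict hmv1 hmu) s hchain1 hsnm n'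
          (fun j => f (j + 1)) hshift
        exact ⟨hfin, by omega⟩
    · -- mu normal
      have hmus : mu = s := by
        rcases Relation.ReflTransGen.cases_head hchain with h | ⟨t, ht, -⟩
        · exact h
        · exact absurd ⟨t, ht⟩ hnm
      obtain ⟨h0, hmv, hfn⟩ := hf
      have hn0 : n = 0 := by
        by_contra hn
        exact hnm ⟨f 1, h0 ▸ hmv 0 (by omega)⟩
      subst hn0
      exact ⟨h0.trans hmus, by rw [← hmus]; omega⟩

/-- all maximal sequences from a strict partition have the same length -/
lemma len_unique (hk : 1 ≤ k) (hmu : IsStrictPartitionM mu) {a b : ℕ}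
    {f g : ℕ → Finset ℕ} (hf : IsMaxMoveSeq k mu a f) (hg : IsMaxMoveSeq k mu b g) :
    a = b := by
  have hs : ¬∃ x, AbacusMove k (g b) x := hg.2.2
  have h1 := master hk (Finset.sum mu id) mu le_rfl hmu (g b) (seq_chain hg) hs a f hf
  have h2 := master hk (Finset.sum mu id) mu le_rfl hmu (g b) (seq_chain hg) hs b g hg
  have : k * a = k * b := by omega
  exact Nat.eq_of_mul_eq_mul_left (by omega) this

end Seq

section Lengths

variable {mu : Finset ℕ}

lemma strict_reach {s : Finset ℕ} (h : Relation.ReflTransGen (AbacusMove k) mu s)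
    (hmu : IsStrictPartitionM mu) : IsStrictPartitionM s := by
  induction h with
  | refl => exact hmu
  | tail h1 h2 ih => exact move_strict h2 ih

lemma chain_cls (hk : 1 ≤ k) {i : ℕ} (hi : i ≤ k / 2) {s : Finset ℕ}
    (h : Relation.ReflTransGen (AbacusMove k) mu s) :
    Relation.ReflTransGen (AbacusMove k) (clsPart k i mu) (clsPart k i s) := by
  induction h with
  | refl => exact Relation.ReflTransGen.refl
  | tail h1 h2 ih =>
    rcases move_cls hk hi h2 with heq | hmv
    · rw [heq]; exact ih
    · exact Relation.ReflTransGen.tail ih hmv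

/-- the length of a maximal sequence is the sum of the class lengths -/
lemma len_sum (hk : 1 ≤ k) (hmu : IsStrictPartitionM mu) {n : ℕ} {f : ℕ → Finset ℕ}
    (hf : IsMaxMoveSeq k mu n f) {nc : ℕ → ℕ}
    (hnc : ∀ i ≤ k / 2, ∃ g, IsMaxMoveSeq k (clsPart k i mu) (nc i) g) :
    n = ∑ i ∈ Finset.Icc 0 (k / 2), nc i := by
  set s := f n with hs
  have hsnm : ¬∃ x, AbacusMove k s x := hf.2.2
  have hchain : Relation.ReflTransGen (AbacusMove k) mu s := seq_chain hf
  have hstricts : IsStrictPartitionM s := strict_reach hchain hmu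
  have hmain := master hk (Finset.sum mu id) mu le_rfl hmu s hchain hsnm n f hf
  have hper : ∀ i ∈ Finset.Icc 0 (k / 2),
      k * nc i + Finset.sum (clsPart k i s) id = Finset.sum (clsPart k i mu) id := by
    intro i hi
    have hi' : i ≤ k / 2 := (Finset.mem_Icc.1 hi).2
    obtain ⟨g, hg⟩ := hnc i hi'
    exact (master hk (Finset.sum (clsPart k i mu) id) (clsPart k i mu) le_rfl
      (strict_clsPart hmu i) (clsPart k i s) (chain_cls hk hi' hchain)
      (noMove_clsPart hk hi' hsnm) (nc i) g hg).2
  have hsum : ∑ i ∈ Finset.Icc 0 (k / 2), (k * nc i + Finset.sum (clsPart k i s) id)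
      = ∑ i ∈ Finset.Icc 0 (k / 2), Finset.sum (clsPart k i mu) id :=
    Finset.sum_congr rfl hper
  rw [Finset.sum_add_distrib, sum_clsPart hk s, sum_clsPart hk mu, ← Finset.mul_sum] at hsum
  have hk2 : k * n = k * ∑ i ∈ Finset.Icc 0 (k / 2), nc i := by omega
  exact Nat.eq_of_mul_eq_mul_left (by omega) hk2

end Lengths

section Counting

variable {mu : Finset ℕ}

instance finite_moves (k : ℕ) (mu : Finset ℕ) : Finite {nu // AbacusMove k mu nu} := by
  have hsub : {nu | AbacusMove k mu nu} ⊆ ↑((mu ∪ mu.image (· - k)).powerset) := by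
    intro nu hnu
    simp only [Finset.coe_powerset, Set.mem_preimage, Set.mem_powerset_iff, Finset.coe_union]
    rcases hnu with ⟨p, hp, hkp, hpk, rfl⟩ | ⟨hkmem, rfl⟩ | ⟨a, ha, b, hb, hab, habk, rfl⟩
    · intro x hx
      rcases Finset.mem_insert.1 hx with rfl | hx
      · exact Set.mem_union_right _ (Finset.mem_coe.2 (Finset.mem_image.2 ⟨p, hp, rfl⟩))
      · exact Set.mem_union_left _ (Finset.mem_coe.2 (Finset.erase_subset _ _ hx))
    · intro x hx
      exact Set.mem_union_left _ (Finset.mem_coe.2 (Finset.erase_subset _ _ hx))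
    · intro x hx
      exact Set.mem_union_left _
        (Finset.mem_coe.2 (Finset.erase_subset _ _ (Finset.erase_subset _ _ hx)))
  exact (Set.Finite.subset (Finset.finite_toSet _) hsub).to_subtype

/-- peeling off the first move of a maximal move sequence -/
def seqSuccEquiv (k : ℕ) (mu : Finset ℕ) (n : ℕ) :
    MaxMoveSeq k mu (n + 1) ≃ (Σ nu : {nu // AbacusMove k mu nu}, MaxMoveSeq k nu.1 n) where
  toFun F := ⟨⟨F.1 1, by have h := F.2.1.2.1 0 (by omega); rwa [F.2.1.1] at h⟩,
    ⟨fun j => F.1 (j + 1),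
      ⟨⟨rfl, fun j hj => F.2.1.2.1 (j + 1) (by omega), F.2.1.2.2⟩,
        fun i hi => F.2.2 (i + 1) (by omega)⟩⟩⟩
  invFun x := ⟨fun j => match j with | 0 => mu | j + 1 => x.2.1 j,
    ⟨⟨rfl, by
        intro j hj
        match j with
        | 0 => simpa [x.2.2.1.1] using x.1.2
        | j + 1 => exact x.2.2.1.2.1 j (by omega),
      x.2.2.1.2.2⟩,
      by
        intro i hi
        match i with
        | i + 1 => exact x.2.2.2 i (by omega)⟩⟩
  left_inv F := by
    apply Subtype.ext
    funext j
    match j with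
    | 0 => exact F.2.1.1.symm
    | j + 1 => rfl
  right_inv x := by
    obtain ⟨⟨nu, hnu⟩, ⟨G, hG⟩⟩ := x
    have h0 : G 0 = nu := hG.1.1
    subst h0
    rfl

instance finite_seq (k : ℕ) (mu : Finset ℕ) (n : ℕ) : Finite (MaxMoveSeq k mu n) := by
  induction n generalizing mu with
  | zero =>
    have : Subsingleton (MaxMoveSeq k mu 0) := by
      constructor
      rintro ⟨f, hf⟩ ⟨g, hg⟩
      apply Subtype.ext
      funext i
      show f i = g i
      rw [hf.2 i (Nat.zero_le i), hg.2 i (Nat.zero_le i), hf.1.1, hg.1.1]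
    exact Finite.of_subsingleton
  | succ n ih =>
    exact Finite.of_equiv _ (seqSuccEquiv k mu n).symm

lemma card_seq_zero (hnm : ¬∃ x, AbacusMove k mu x) : Nat.card (MaxMoveSeq k mu 0) = 1 := by
  haveI : Unique (MaxMoveSeq k mu 0) := by
    refine ⟨⟨⟨fun _ => mu, ⟨⟨rfl, by omega, hnm⟩, fun i _ => rfl⟩⟩⟩, ?_⟩
    rintro ⟨f, hf⟩
    apply Subtype.ext
    funext i
    exact (hf.2 i (Nat.zero_le i)).trans hf.1.1
  exact Nat.card_unique

lemma card_seq_succ (k : ℕ) (mu : Finset ℕ) (n : ℕ) [Fintype {nu // AbacusMove k mu nu}] :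
    Nat.card (MaxMoveSeq k mu (n + 1))
      = ∑ nu : {nu // AbacusMove k mu nu}, Nat.card (MaxMoveSeq k nu.1 n) := by
  rw [Nat.card_congr (seqSuccEquiv k mu n)]
  haveI : ∀ nu : {nu // AbacusMove k mu nu}, Fintype (MaxMoveSeq k nu.1 n) :=
    fun nu => Fintype.ofFinite _
  rw [Nat.card_eq_fintype_card, Fintype.card_sigma]
  exact Finset.sum_congr rfl fun nu _ => (Nat.card_eq_fintype_card).symm


noncomputable instance (k : ℕ) (mu : Finset ℕ) : Fintype {nu // AbacusMove k mu nu} :=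
  Fintype.ofFinite _

/-- lift of a class move, chosen via choice -/
noncomputable def liftM (hk : 1 ≤ k) (mu : Finset ℕ)
    (x : Σ c : {c : ℕ // c ∈ Finset.Icc 0 (k / 2)},
      {t // AbacusMove k (clsPart k c.1 mu) t}) : Finset ℕ :=
  (move_lift hk (Finset.mem_Icc.1 x.1.2).2 x.2.2).choose

lemma liftM_spec (hk : 1 ≤ k) (mu : Finset ℕ)
    (x : Σ c : {c : ℕ // c ∈ Finset.Icc 0 (k / 2)},
      {t // AbacusMove k (clsPart k c.1 mu) t}) :
    AbacusMove k mu (liftM hk mu x) ∧ clsPart k x.1.1 (liftM hk mu x) = x.2.1 ∧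
      ∀ j ≤ k / 2, j ≠ x.1.1 → clsPart k j (liftM hk mu x) = clsPart k j mu :=
  (move_lift hk (Finset.mem_Icc.1 x.1.2).2 x.2.2).choose_spec

lemma liftM_bijective (hk : 1 ≤ k) (mu : Finset ℕ) :
    Function.Bijective (fun x => (⟨liftM hk mu x, (liftM_spec hk mu x).1⟩ :
      {nu // AbacusMove k mu nu})) := by
  constructor
  · rintro ⟨⟨c, hc⟩, ⟨t, ht⟩⟩ ⟨⟨c', hc'⟩, ⟨t', ht'⟩⟩ h
    simp only [Subtype.mk.injEq] at h
    have S1 := liftM_spec hk mu ⟨⟨c, hc⟩, ⟨t, ht⟩⟩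
    have S2 := liftM_spec hk mu ⟨⟨c', hc'⟩, ⟨t', ht'⟩⟩
    have hcc : c = c' := by
      by_contra hne
      have h1 : clsPart k c (liftM hk mu ⟨⟨c', hc'⟩, ⟨t', ht'⟩⟩) = clsPart k c mu :=
        S2.2.2 c (Finset.mem_Icc.1 hc).2 hne
      rw [← h] at h1
      have h2 : clsPart k c (liftM hk mu ⟨⟨c, hc⟩, ⟨t, ht⟩⟩) = t := S1.2.1
      have h2 : clsPart k c (liftM hk mu ⟨⟨c, hc⟩, ⟨t, ht⟩⟩) = t := S1.2.1
      exact move_ne ht (by rw [← h1, h2])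
    subst hcc
    have htt : t = t' := by
      have h2 : clsPart k c (liftM hk mu ⟨⟨c, hc⟩, ⟨t, ht⟩⟩) = t := S1.2.1
      have h3 : clsPart k c (liftM hk mu ⟨⟨c, hc'⟩, ⟨t', ht'⟩⟩) = t' := S2.2.1
      rw [← h2, ← h3, h]
    subst htt
    rfl
  · rintro ⟨nu, hnu⟩
    obtain ⟨c, hc, hsym, hoth, hmv⟩ := move_project hk hnu
    refine ⟨⟨⟨c, Finset.mem_Icc.2 ⟨Nat.zero_le _, hc⟩⟩, ⟨clsPart k c nu, hmv⟩⟩, ?_⟩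
    apply Subtype.ext
    have S := liftM_spec hk mu ⟨⟨c, Finset.mem_Icc.2 ⟨Nat.zero_le _, hc⟩⟩, ⟨clsPart k c nu, hmv⟩⟩
    apply clsPart_ext hk
    intro j hj
    by_cases hjc : j = c
    · subst hjc
      exact S.2.1
    · rw [S.2.2 j hj hjc, hoth j hj hjc]

/-- when `mu` has no moves, the counting identity holds -/
lemma count_normal (hk : 1 ≤ k) {mu : Finset ℕ} (hmu : IsStrictPartitionM mu)
    (hnm : ¬∃ x, AbacusMove k mu x) {n : ℕ} (hfn : ∃ f, IsMaxMoveSeq k mu n f)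
    {nc : ℕ → ℕ} (hnc : ∀ i ≤ k / 2, ∃ g, IsMaxMoveSeq k (clsPart k i mu) (nc i) g) :
    Nat.card (MaxMoveSeq k mu n) * ∏ i ∈ Finset.Icc 0 (k / 2), (nc i).factorial
      = n.factorial
        * ∏ i ∈ Finset.Icc 0 (k / 2), Nat.card (MaxMoveSeq k (clsPart k i mu) (nc i)) := by
  obtain ⟨f, hf⟩ := hfn
  have hconst : IsMaxMoveSeq k mu 0 (fun _ => mu) := ⟨rfl, by omega, hnm⟩
  have hn0 : n = 0 := len_unique hk hmu hf hconst
  subst hn0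
  have hcls : ∀ i ≤ k / 2, nc i = 0 := by
    intro i hi
    have hnmi := noMove_clsPart hk hi hnm
    obtain ⟨g, hg⟩ := hnc i hi
    have hconsti : IsMaxMoveSeq k (clsPart k i mu) 0 (fun _ => clsPart k i mu) :=
      ⟨rfl, by omega, hnmi⟩
    exact len_unique hk (strict_clsPart hmu i) hg hconsti
  rw [card_seq_zero hnm, Nat.factorial_zero]
  have h1 : ∀ i ∈ Finset.Icc 0 (k / 2), (nc i).factorial = 1 := by
    intro i hi
    rw [hcls i (Finset.mem_Icc.1 hi).2, Nat.factorial_zero]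
  have h2 : ∀ i ∈ Finset.Icc 0 (k / 2),
      Nat.card (MaxMoveSeq k (clsPart k i mu) (nc i)) = 1 := by
    intro i hi
    rw [hcls i (Finset.mem_Icc.1 hi).2]
    exact card_seq_zero (noMove_clsPart hk (Finset.mem_Icc.1 hi).2 hnm)
  rw [Finset.prod_congr rfl h1, Finset.prod_congr rfl h2, Finset.prod_const_one]


/-- the main counting identity, by strong induction on the total sum -/
lemma count_main (hk : 1 ≤ k) : ∀ N mu, Finset.sum mu id ≤ N → IsStrictPartitionM mu →
    ∀ n : ℕ, (∃ f, IsMaxMoveSeq k mu n f) →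
    ∀ nc : ℕ → ℕ, (∀ i ≤ k / 2, ∃ g, IsMaxMoveSeq k (clsPart k i mu) (nc i) g) →
    Nat.card (MaxMoveSeq k mu n) * ∏ i ∈ Finset.Icc 0 (k / 2), (nc i).factorial
      = n.factorial
        * ∏ i ∈ Finset.Icc 0 (k / 2), Nat.card (MaxMoveSeq k (clsPart k i mu) (nc i)) := by
  intro N
  induction N with
  | zero =>
    intro mu hsum hmu n hfn nc hnc
    have hnm : ¬∃ x, AbacusMove k mu x := by
      rintro ⟨nu, hnu⟩
      have : Finset.sum nu id + k = Finset.sum mu id := move_sum hnu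
      omega
    exact count_normal hk hmu hnm hfn hnc
  | succ N ih =>
    intro mu hsum hmu n hfn nc hnc
    by_cases hnm : ∃ x, AbacusMove k mu x
    · obtain ⟨f, hf⟩ := hfn
      have hn0 : n ≠ 0 := by
        rintro rfl
        have h2 := hf.2.2
        rw [hf.1] at h2
        exact h2 hnm
      obtain ⟨n', rfl⟩ : ∃ n', n = n' + 1 := ⟨n - 1, by omega⟩
      have hstep : ∀ x : Σ c : {c : ℕ // c ∈ Finset.Icc 0 (k / 2)},
          {t // AbacusMove k (clsPart k c.1 mu) t},
          Nat.card (MaxMoveSeq k (liftM hk mu x) n')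
              * ∏ i ∈ Finset.Icc 0 (k / 2), (nc i).factorial
            = nc x.1.1 * (n'.factorial
              * (Nat.card (MaxMoveSeq k x.2.1 (nc x.1.1 - 1))
                * ∏ i ∈ (Finset.Icc 0 (k / 2)).erase x.1.1,
                    Nat.card (MaxMoveSeq k (clsPart k i mu) (nc i)))) := by
        rintro ⟨⟨c, hcIcc⟩, ⟨t, ht⟩⟩
        have hc : c ≤ k / 2 := (Finset.mem_Icc.1 hcIcc).2
        obtain ⟨hmv, hcls0, hoth0⟩ := liftM_spec hk mu ⟨⟨c, hcIcc⟩, ⟨t, ht⟩⟩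
        set nu := liftM hk mu ⟨⟨c, hcIcc⟩, ⟨t, ht⟩⟩ with hnudef
        have hcls : clsPart k c nu = t := hcls0
        have hoth : ∀ j ≤ k / 2, j ≠ c → clsPart k j nu = clsPart k j mu := hoth0
        have hnusum : Finset.sum nu id + k = Finset.sum mu id := move_sum hmv
        have hnustrict : IsStrictPartitionM nu := move_strict hmv hmu
        obtain ⟨m, f', hf'⟩ := exists_max hk (Finset.sum nu id) nu le_rfl hnustrict
        have hm : m = n' := by
          have hpre := seq_prepend hmv hf'
          have := len_unique hk hmu hpre hf
          omega
        subst hm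
        have htstrict : IsStrictPartitionM t := move_strict ht (strict_clsPart hmu c)
        obtain ⟨m', g', hg'⟩ := exists_max hk (Finset.sum t id) t le_rfl htstrict
        have hm' : nc c = m' + 1 := by
          have hpre := seq_prepend ht hg'
          obtain ⟨g0, hg0⟩ := hnc c hc
          exact len_unique hk (strict_clsPart hmu c) hg0 hpre
        set nc' := Function.update nc c (nc c - 1) with hncdef
        have hnc'c : nc' c = nc c - 1 := Function.update_self c _ nc
        have hnc'ne : ∀ i, i ≠ c → nc' i = nc i := fun i hi => Function.update_of_ne hi _ nc
        have hncnu : ∀ i ≤ k / 2, ∃ g, IsMaxMoveSeq k (clsPart k i nu) (nc' i) g := by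
          intro i hi
          by_cases hic : i = c
          · subst hic
            rw [hcls, hnc'c]
            exact ⟨g', by rw [show nc i - 1 = m' by omega]; exact hg'⟩
          · rw [hoth i hi hic, hnc'ne i hic]
            exact hnc i hi
        have hIH := ih nu (by omega) hnustrict m ⟨f', hf'⟩ nc' hncnu
        have hsplit : ∏ i ∈ Finset.Icc 0 (k / 2), (nc i).factorial = (nc c).factorial
            * ∏ i ∈ (Finset.Icc 0 (k / 2)).erase c, (nc i).factorial :=
          (Finset.mul_prod_erase _ _ hcIcc).symm
        have hfac : (nc c).factorial = nc c * (nc c - 1).factorial := by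
          rw [hm']
          simp [Nat.factorial_succ]
        have herase1 : ∏ i ∈ (Finset.Icc 0 (k / 2)).erase c, (nc i).factorial
            = ∏ i ∈ (Finset.Icc 0 (k / 2)).erase c, (nc' i).factorial :=
          Finset.prod_congr rfl fun i hi => by
            rw [hnc'ne i (Finset.mem_erase.1 hi).1]
        have hPnc' : ∏ i ∈ Finset.Icc 0 (k / 2), (nc i).factorial
            = nc c * ∏ i ∈ Finset.Icc 0 (k / 2), (nc' i).factorial := by
          rw [hsplit, hfac, herase1,
            ← Finset.mul_prod_erase (Finset.Icc 0 (k / 2))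
              (fun i => (nc' i).factorial) hcIcc, hnc'c]
          ring
        have hcsplit : ∏ i ∈ Finset.Icc 0 (k / 2),
              Nat.card (MaxMoveSeq k (clsPart k i nu) (nc' i))
            = Nat.card (MaxMoveSeq k t (nc c - 1))
              * ∏ i ∈ (Finset.Icc 0 (k / 2)).erase c,
                  Nat.card (MaxMoveSeq k (clsPart k i mu) (nc i)) := by
          rw [← Finset.mul_prod_erase (Finset.Icc 0 (k / 2))
            (fun i => Nat.card (MaxMoveSeq k (clsPart k i nu) (nc' i))) hcIcc,
            hcls, hnc'c]
          congr 1
          refine Finset.prod_congr rfl fun i hi => ?_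
          obtain ⟨hine, hiIcc⟩ := Finset.mem_erase.1 hi
          rw [hoth i (Finset.mem_Icc.1 hiIcc).2 hine, hnc'ne i hine]
        show Nat.card (MaxMoveSeq k nu m) * ∏ i ∈ Finset.Icc 0 (k / 2), (nc i).factorial
          = nc c * (m.factorial * (Nat.card (MaxMoveSeq k t (nc c - 1))
            * ∏ i ∈ (Finset.Icc 0 (k / 2)).erase c,
                Nat.card (MaxMoveSeq k (clsPart k i mu) (nc i))))
        calc Nat.card (MaxMoveSeq k nu m) * ∏ i ∈ Finset.Icc 0 (k / 2), (nc i).factorial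
            = nc c * (Nat.card (MaxMoveSeq k nu m)
                * ∏ i ∈ Finset.Icc 0 (k / 2), (nc' i).factorial) := by rw [hPnc']; ring
          _ = nc c * (m.factorial
                * ∏ i ∈ Finset.Icc 0 (k / 2),
                    Nat.card (MaxMoveSeq k (clsPart k i nu) (nc' i))) := by rw [hIH]
          _ = _ := by rw [hcsplit]
      -- now assemble
      have hbij := liftM_bijective hk mu
      have hlen : (n' + 1) = ∑ i ∈ Finset.Icc 0 (k / 2), nc i := len_sum hk hmu hf hnc
      calc Nat.card (MaxMoveSeq k mu (n' + 1)) * ∏ i ∈ Finset.Icc 0 (k / 2), (nc i).factorial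
          = (∑ nu : {nu // AbacusMove k mu nu}, Nat.card (MaxMoveSeq k nu.1 n'))
              * ∏ i ∈ Finset.Icc 0 (k / 2), (nc i).factorial := by
            rw [card_seq_succ]
        _ = ∑ nu : {nu // AbacusMove k mu nu}, Nat.card (MaxMoveSeq k nu.1 n')
              * ∏ i ∈ Finset.Icc 0 (k / 2), (nc i).factorial := by
            rw [Finset.sum_mul]
        _ = ∑ x : Σ c : {c : ℕ // c ∈ Finset.Icc 0 (k / 2)},
              {t // AbacusMove k (clsPart k c.1 mu) t},
              Nat.card (MaxMoveSeq k (liftM hk mu x) n')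
                * ∏ i ∈ Finset.Icc 0 (k / 2), (nc i).factorial := by
            rw [← Equiv.sum_comp (Equiv.ofBijective _ hbij)
              (fun nu : {nu // AbacusMove k mu nu} =>
                Nat.card (MaxMoveSeq k nu.1 n')
                  * ∏ i ∈ Finset.Icc 0 (k / 2), (nc i).factorial)]
            rfl
        _ = ∑ c : {c : ℕ // c ∈ Finset.Icc 0 (k / 2)},
              ∑ t : {t // AbacusMove k (clsPart k c.1 mu) t},
              nc c.1 * (n'.factorial * (Nat.card (MaxMoveSeq k t.1 (nc c.1 - 1))
                * ∏ i ∈ (Finset.Icc 0 (k / 2)).erase c.1,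
                    Nat.card (MaxMoveSeq k (clsPart k i mu) (nc i)))) := by
            rw [← Finset.univ_sigma_univ, Finset.sum_sigma]
            exact Finset.sum_congr rfl fun c _ => Finset.sum_congr rfl fun t _ => hstep ⟨c, t⟩
        _ = ∑ c : {c : ℕ // c ∈ Finset.Icc 0 (k / 2)},
              nc c.1 * (n'.factorial * ∏ i ∈ Finset.Icc 0 (k / 2),
                Nat.card (MaxMoveSeq k (clsPart k i mu) (nc i))) := by
            refine Finset.sum_congr rfl fun c _ => ?_
            have hc : c.1 ≤ k / 2 := (Finset.mem_Icc.1 c.2).2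
            rcases isEmpty_or_nonempty {t // AbacusMove k (clsPart k c.1 mu) t} with hem | hne
            · have hnmi : ¬∃ x, AbacusMove k (clsPart k c.1 mu) x := by
                rintro ⟨t, ht⟩
                exact hem.false ⟨t, ht⟩
              have hncc : nc c.1 = 0 := by
                obtain ⟨g, hg⟩ := hnc c.1 hc
                have hconsti : IsMaxMoveSeq k (clsPart k c.1 mu) 0
                    (fun _ => clsPart k c.1 mu) := ⟨rfl, by omega, hnmi⟩
                exact len_unique hk (strict_clsPart hmu c.1) hg hconsti
              rw [Finset.univ_eq_empty, Finset.sum_empty, hncc, zero_mul]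
            · have hncc : nc c.1 ≠ 0 := by
                intro h0
                obtain ⟨t⟩ := hne
                obtain ⟨g, hg⟩ := hnc c.1 hc
                rw [h0] at hg
                have h2 := hg.2.2
                rw [hg.1] at h2
                exact h2 ⟨t.1, t.2⟩
              have hrec : Nat.card (MaxMoveSeq k (clsPart k c.1 mu) (nc c.1))
                  = ∑ t : {t // AbacusMove k (clsPart k c.1 mu) t},
                      Nat.card (MaxMoveSeq k t.1 (nc c.1 - 1)) := by
                conv_lhs => rw [show nc c.1 = (nc c.1 - 1) + 1 by omega]
                exact card_seq_succ k (clsPart k c.1 mu) (nc c.1 - 1)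
              have hRHS : nc c.1 * (n'.factorial * ∏ i ∈ Finset.Icc 0 (k / 2),
                    Nat.card (MaxMoveSeq k (clsPart k i mu) (nc i)))
                  = ∑ t : {t // AbacusMove k (clsPart k c.1 mu) t},
                      nc c.1 * (n'.factorial * (Nat.card (MaxMoveSeq k t.1 (nc c.1 - 1))
                        * ∏ i ∈ (Finset.Icc 0 (k / 2)).erase c.1,
                            Nat.card (MaxMoveSeq k (clsPart k i mu) (nc i)))) := by
                rw [← Finset.mul_prod_erase (Finset.Icc 0 (k / 2))
                  (fun i => Nat.card (MaxMoveSeq k (clsPart k i mu) (nc i))) c.2,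
                  hrec, Finset.sum_mul, Finset.mul_sum, Finset.mul_sum]
              rw [hRHS]
        _ = (∑ c ∈ Finset.Icc 0 (k / 2), nc c) * (n'.factorial
              * ∏ i ∈ Finset.Icc 0 (k / 2),
                  Nat.card (MaxMoveSeq k (clsPart k i mu) (nc i))) := by
            rw [← Finset.sum_coe_sort (Finset.Icc 0 (k / 2)) nc, Finset.sum_mul]
        _ = (n' + 1).factorial * ∏ i ∈ Finset.Icc 0 (k / 2),
              Nat.card (MaxMoveSeq k (clsPart k i mu) (nc i)) := by
            rw [← hlen, Nat.factorial_succ, mul_assoc]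
    · exact count_normal hk hmu hnm hfn hnc

end Counting
end Stmt9

open Stmt9

/-- Every `k`-abacus move changes only parts with residues in a single
class `{i, k-i}`; all maximal move sequences from `λ^{(c)}` have a common length `N_c`;
all maximal move sequences from `λ` have length `N = ∑_c N_c`; and the number of maximal
move sequences from `λ` equals the multinomial coefficient `N!/∏_c N_c!` times the product
of the numbers of maximal move sequences from the `λ^{(c)}` (stated multiplicatively to
avoid division). -/
theorem stmt9 (k : ℕ) (hk : 1 ≤ k) (lam : Finset ℕ) (hlam : IsStrictPartitionM lam) :
    (∀ mu nu : Finset ℕ, AbacusMove k mu nu → ∃ i, i ≤ k / 2 ∧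
        ∀ p ∈ (mu \ nu) ∪ (nu \ mu), p % k = i ∨ p % k = (k - i) % k) ∧
    ∃ Nc : ℕ → ℕ,
      (∀ i, i ≤ k / 2 → ∀ n : ℕ, ∀ f : ℕ → Finset ℕ,
        IsMaxMoveSeq k (clsPart k i lam) n f → n = Nc i) ∧
      (∀ n : ℕ, ∀ f : ℕ → Finset ℕ,
        IsMaxMoveSeq k lam n f → n = ∑ i ∈ Finset.Icc 0 (k / 2), Nc i) ∧
      (Nat.card (MaxMoveSeq k lam (∑ i ∈ Finset.Icc 0 (k / 2), Nc i))
          * ∏ i ∈ Finset.Icc 0 (k / 2), (Nc i).factorial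
        = (∑ i ∈ Finset.Icc 0 (k / 2), Nc i).factorial
          * ∏ i ∈ Finset.Icc 0 (k / 2), Nat.card (MaxMoveSeq k (clsPart k i lam) (Nc i))) := by
  constructor
  · intro mu nu h
    obtain ⟨c, hc, hsym, -, -⟩ := move_project hk h
    exact ⟨c, hc, fun p hp => (pred_iff_clsF hk hc p).2 (hsym p hp)⟩
  · classical
    set Nc : ℕ → ℕ := fun i =>
      if h : i ≤ k / 2 then
        (exists_max hk (Finset.sum (clsPart k i lam) id) (clsPart k i lam) le_rfl
          (strict_clsPart hlam i)).choose
      else 0 with hNcdef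
    have hNcspec : ∀ i ≤ k / 2, ∃ g, IsMaxMoveSeq k (clsPart k i lam) (Nc i) g := by
      intro i hi
      have hspec := (exists_max hk (Finset.sum (clsPart k i lam) id) (clsPart k i lam) le_rfl
        (strict_clsPart hlam i)).choose_spec
      have hNci : Nc i = (exists_max hk (Finset.sum (clsPart k i lam) id) (clsPart k i lam)
          le_rfl (strict_clsPart hlam i)).choose := by
        simp only [hNcdef]
        rw [dif_pos hi]
      rw [hNci]
      exact hspec
    refine ⟨Nc, ?_, ?_, ?_⟩
    · intro i hi n f hfseq
      obtain ⟨g, hg⟩ := hNcspec i hi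
      exact len_unique hk (strict_clsPart hlam i) hfseq hg
    · intro n f hfseq
      exact len_sum hk hlam hfseq hNcspec
    · obtain ⟨n0, f0, hf0⟩ := exists_max hk (Finset.sum lam id) lam le_rfl hlam
      have hn0 : n0 = ∑ i ∈ Finset.Icc 0 (k / 2), Nc i := len_sum hk hlam hf0 hNcspec
      rw [← hn0]
      exact count_main hk (Finset.sum lam id) lam le_rfl hlam n0 ⟨f0, hf0⟩ Nc hNcspec
end

section
/- Let w be a finite sequence of distinct positive integers containing both i and i+1, and let M be any set (of marked values). Let w_M be the word formed by the letters of w belonging to M, listed in reverse order of their occurrence in w, followed by the letters of w not in M, in their order of occurrence. Then i ∈ Des(w_M) if and only if either (i ∈ Des(w) and i ∉ M) or (i ∉ Des(w) and i+1 ∈ M). -/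
/-- The descent set of a word with distinct letters: `i` such that both `i` and `i + 1`
occur, with `i + 1` occurring before `i`. -/
def DesList (w : List ℕ) : Set ℕ :=
  {i | i ∈ w ∧ (i + 1) ∈ w ∧ w.idxOf (i + 1) < w.idxOf i}

/-- The marked word `w_M`: the letters of `w` belonging to `M`, in reverse order of their
occurrence in `w`, followed by the letters not in `M`, in their order of occurrence. -/
noncomputable def markedWordS (w : List ℕ) (M : Set ℕ) : List ℕ :=
  letI : DecidablePred (· ∈ M) := fun _ => Classical.propDecidable _
  (w.filter (fun x => decide (x ∈ M))).reverse ++ w.filter (fun x => decide (x ∉ M))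

/-!
For distinct letters, "`i + 1` occurs before `i`" is the sublist relation `[i + 1, i] <+ w`.
In `w_M` the marked letters come first and in reversed order, so the relative order of `i` and
`i + 1` is flipped when both are marked, kept when neither is, and becomes "`i + 1` first"
exactly when `i + 1` alone is marked.
-/

namespace List

variable {α : Type*}

theorem pair_sublist_append_iff {a b : α} {l₁ l₂ : List α} :
    [a, b] <+ l₁ ++ l₂ ↔ [a, b] <+ l₁ ∨ (a ∈ l₁ ∧ b ∈ l₂) ∨ [a, b] <+ l₂ := by
  rw [sublist_append_iff]
  constructor
  · rintro ⟨r₁, r₂, h, h₁, h₂⟩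
    match r₁, r₂, h with
    | [], _, rfl => exact .inr (.inr h₂)
    | [_], [_], rfl => exact .inr (.inl ⟨singleton_sublist.1 h₁, singleton_sublist.1 h₂⟩)
    | [_, _], [], rfl => exact .inl h₁
  · rintro (h | ⟨ha, hb⟩ | h)
    · exact ⟨[a, b], [], by simp, h, nil_sublist _⟩
    · exact ⟨[a], [b], rfl, singleton_sublist.2 ha, singleton_sublist.2 hb⟩
    · exact ⟨[], [a, b], rfl, nil_sublist _, h⟩

theorem pair_sublist_reverse_iff {a b : α} {l : List α} : [a, b] <+ l.reverse ↔ [b, a] <+ l := by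
  simpa using reverse_sublist (l₁ := [b, a]) (l₂ := l)

theorem pair_sublist_filter_iff {p : α → Bool} {a b : α} {l : List α} :
    [a, b] <+ l.filter p ↔ [a, b] <+ l ∧ p a ∧ p b := by
  constructor
  · intro h
    have hp : ∀ x ∈ [a, b], p x := fun x hx => (mem_filter.1 (h.subset hx)).2
    exact ⟨h.trans filter_sublist, hp a (by simp), hp b (by simp)⟩
  · rintro ⟨h, ha, hb⟩
    simpa [ha, hb] using h.filter p

variable [DecidableEq α]

theorem Nodup.pair_sublist_iff_idxOf_lt {l : List α} (hl : l.Nodup) {a b : α} (hb : b ∈ l) :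
    [a, b] <+ l ↔ l.idxOf a < l.idxOf b := by
  induction l with
  | nil => simp at hb
  | cons c t ih =>
    rw [nodup_cons] at hl
    rw [sublist_cons_iff]
    grind

theorem Nodup.not_pair_sublist_iff {l : List α} (hl : l.Nodup) {a b : α} (ha : a ∈ l) (hb : b ∈ l)
    (hab : a ≠ b) : ¬[a, b] <+ l ↔ [b, a] <+ l := by
  rw [hl.pair_sublist_iff_idxOf_lt hb, hl.pair_sublist_iff_idxOf_lt ha, not_lt,
    le_iff_lt_or_eq, or_iff_left (mt (idxOf_inj hb).1 hab.symm)]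

theorem Nodup.pair_sublist_reverse_filter_append_filter_iff {l : List α} (hl : l.Nodup) {a b : α}
    (ha : a ∈ l) (hb : b ∈ l) (hab : a ≠ b) (p : α → Bool) :
    [a, b] <+ (l.filter p).reverse ++ l.filter (fun x => !p x) ↔
      ([a, b] <+ l ∧ p b = false) ∨ (¬[a, b] <+ l ∧ p a = true) := by
  simp only [pair_sublist_append_iff, pair_sublist_reverse_iff, pair_sublist_filter_iff,
    mem_reverse, mem_filter]
  cases p a <;> cases p b
  · simp [ha, hb]
  · simp
  · simpa [ha, hb] using em ([a, b] <+ l)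
  · simpa [ha, hb] using (hl.not_pair_sublist_iff ha hb hab).symm

end List

open List

theorem mem_desList_iff_pair_sublist {w : List ℕ} (hw : w.Nodup) {i : ℕ} :
    i ∈ DesList w ↔ [i + 1, i] <+ w := by
  refine ⟨fun ⟨hi, _, h⟩ => (hw.pair_sublist_iff_idxOf_lt hi).2 h, fun h => ?_⟩
  have hi : i ∈ w := h.subset (by simp)
  exact ⟨hi, h.subset (by simp), (hw.pair_sublist_iff_idxOf_lt hi).1 h⟩

open Classical in
theorem markedWordS_eq (w : List ℕ) (M : Set ℕ) :
    markedWordS w M = (w.filter (· ∈ M)).reverse ++ w.filter (fun x => !decide (x ∈ M)) := by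
  unfold markedWordS
  congr
  funext x
  simp

theorem markedWordS_perm (w : List ℕ) (M : Set ℕ) : markedWordS w M ~ w := by
  rw [markedWordS_eq]
  exact ((reverse_perm _).append_right _).trans (filter_append_perm _ _)

theorem stmt12_general (w : List ℕ) (hnd : w.Nodup)
    (i : ℕ) (hi : i ∈ w) (hi1 : (i + 1) ∈ w) (M : Set ℕ) :
    i ∈ DesList (markedWordS w M) ↔
      ((i ∈ DesList w ∧ i ∉ M) ∨ (i ∉ DesList w ∧ (i + 1) ∈ M)) := by
  rw [mem_desList_iff_pair_sublist ((markedWordS_perm w M).nodup_iff.2 hnd),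
    mem_desList_iff_pair_sublist hnd, markedWordS_eq,
    hnd.pair_sublist_reverse_filter_append_filter_iff hi1 hi (Nat.succ_ne_self i)]
  simp

/-- For a word `w` of distinct positive integers containing `i` and
`i + 1`, and any set `M` of marked values: `i ∈ Des(w_M)` iff either `i ∈ Des(w)` and
`i ∉ M`, or `i ∉ Des(w)` and `i + 1 ∈ M`. -/
theorem stmt12 (w : List ℕ) (hpos : ∀ x ∈ w, 0 < x) (hnd : w.Nodup)
    (i : ℕ) (hi : i ∈ w) (hi1 : (i + 1) ∈ w) (M : Set ℕ) :
    i ∈ DesList (markedWordS w M) ↔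
      ((i ∈ DesList w ∧ i ∉ M) ∨ (i ∉ DesList w ∧ (i + 1) ∈ M)) :=
  stmt12_general w hnd i hi hi1 M
end

section
/- Let n ≥ 1, D ⊆ {1, …, n−1} and M ⊆ {1, …, n}, and set D_M = { i ∈ {1, …, n−1} : (i ∈ D and i ∉ M) or (i ∉ D and i+1 ∈ M) }. Then Peak(D) ⊆ Spike(D_M). -/
/-- `Peak(D) = {i ∈ D : i ≥ 2 and i - 1 ∉ D}`. -/
def peak (D : Finset ℕ) : Finset ℕ := D.filter (fun i => 2 ≤ i ∧ i - 1 ∉ D)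

/-- `Spike(E) = {i ≥ 1 : exactly one of i and i - 1 lies in E}` (for sets of positive
integers, so that `0 ∉ E`). -/
def spike (E : Finset ℕ) : Set ℕ :=
  {i | 1 ≤ i ∧ ((i ∈ E ∧ i - 1 ∉ E) ∨ (i ∉ E ∧ i - 1 ∈ E))}

/-- `D_M = {i ∈ {1, …, n-1} : (i ∈ D and i ∉ M) or (i ∉ D and i + 1 ∈ M)}`, the descent
set of the marking `M` of a word with descent set `D`. -/
def descMark (n : ℕ) (D M : Finset ℕ) : Finset ℕ :=
  (Finset.Icc 1 (n - 1)).filter (fun i => (i ∈ D ∧ i ∉ M) ∨ (i ∉ D ∧ (i + 1) ∈ M))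

/-- For `D ⊆ {1, …, n-1}` and `M ⊆ {1, …, n}`,
`Peak(D) ⊆ Spike(D_M)`. -/
theorem stmt14 (n : ℕ) (hn : 1 ≤ n) (D M : Finset ℕ)
    (hD : D ⊆ Finset.Icc 1 (n - 1)) (hM : M ⊆ Finset.Icc 1 n) :
    ↑(peak D) ⊆ spike (descMark n D M) := by
  intro i hi
  simp only [peak, Finset.coe_filter, Set.mem_setOf_eq, Finset.mem_filter] at hi
  obtain ⟨hiD, h2i, hiD'⟩ := hi
  have hiI := hD hiD
  rw [Finset.mem_Icc] at hiI
  have hmemi : i ∈ descMark n D M ↔ i ∉ M := by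
    simp only [descMark, Finset.mem_filter, Finset.mem_Icc]
    constructor
    · rintro ⟨_, ⟨_, h⟩ | ⟨h, _⟩⟩
      · exact h
      · exact absurd hiD h
    · intro h
      exact ⟨⟨hiI.1, hiI.2⟩, Or.inl ⟨hiD, h⟩⟩
  have hmemi1 : i - 1 ∈ descMark n D M ↔ i ∈ M := by
    have hadd : i - 1 + 1 = i := by omega
    simp only [descMark, Finset.mem_filter, Finset.mem_Icc, hadd]
    constructor
    · rintro ⟨_, ⟨h, _⟩ | ⟨_, h⟩⟩
      · exact absurd h hiD'
      · exact h
    · intro h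
      exact ⟨⟨by omega, by omega⟩, Or.inr ⟨hiD', h⟩⟩
  refine ⟨by omega, ?_⟩
  by_cases hM' : i ∈ M
  · exact Or.inr ⟨by simp [hmemi, hM'], hmemi1.mpr hM'⟩
  · exact Or.inl ⟨hmemi.mpr hM', by simp [hmemi1, hM']⟩
end

section
/- Let n ≥ 1, D ⊆ {1, …, n−1}, and let E ⊆ {1, …, n−1} satisfy Peak(D) ⊆ Spike(E). Then there exists M ⊆ {1, …, n} such that D_M = E. -/
/-- For `D ⊆ {1, …, n-1}` and any `E ⊆ {1, …, n-1}` with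
`Peak(D) ⊆ Spike(E)`, there is a marking `M ⊆ {1, …, n}` with `D_M = E`. -/
theorem stmt15 (n : ℕ) (hn : 1 ≤ n) (D E : Finset ℕ)
    (hD : D ⊆ Finset.Icc 1 (n - 1)) (hE : E ⊆ Finset.Icc 1 (n - 1))
    (hPS : ↑(peak D) ⊆ spike E) :
    ∃ M : Finset ℕ, M ⊆ Finset.Icc 1 n ∧ descMark n D M = E := by
  classical
  refine ⟨(Finset.Icc 1 n).filter (fun j => (j ∈ D ∧ j ∉ E) ∨ (j ∉ D ∧ j - 1 ∈ E)),
    Finset.filter_subset _ _, ?_⟩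
  ext i
  simp only [descMark, Finset.mem_filter, Finset.mem_Icc, Nat.add_sub_cancel]
  constructor
  · rintro ⟨⟨hi1, hi2⟩, hcase⟩
    rcases hcase with ⟨hiD, hiM⟩ | ⟨hiD, hiM⟩
    · by_contra hE'
      exact hiM ⟨⟨hi1, le_trans hi2 (Nat.sub_le n 1)⟩, Or.inl ⟨hiD, hE'⟩⟩
    · rcases hiM with ⟨_, h⟩
      rcases h with ⟨h1, h2⟩ | ⟨_, h2⟩
      · -- i+1 ∈ D, i ∉ D : i+1 is a peak
        have hp : (i + 1) ∈ peak D := by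
          simp only [peak, Finset.mem_filter, Nat.add_sub_cancel]
          exact ⟨h1, by omega, hiD⟩
        have hs := hPS hp
        simp only [spike, Set.mem_setOf_eq, Nat.add_sub_cancel] at hs
        rcases hs.2 with ⟨hx, _⟩ | ⟨_, hy⟩
        · exact absurd hx h2
        · exact hy
      · exact h2
  · intro hiE
    have hiI := hE hiE
    rw [Finset.mem_Icc] at hiI
    refine ⟨hiI, ?_⟩
    by_cases hiD : i ∈ D
    · refine Or.inl ⟨hiD, ?_⟩
      rintro ⟨_, ⟨_, hnE⟩ | ⟨hnD, _⟩⟩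
      · exact hnE hiE
      · exact hnD hiD
    · refine Or.inr ⟨hiD, ?_⟩
      refine ⟨⟨by omega, by omega⟩, ?_⟩
      by_cases hD1 : i + 1 ∈ D
      · refine Or.inl ⟨hD1, ?_⟩
        have hp : (i + 1) ∈ peak D := by
          simp only [peak, Finset.mem_filter, Nat.add_sub_cancel]
          exact ⟨hD1, by omega, hiD⟩
        have hs := hPS hp
        simp only [spike, Set.mem_setOf_eq, Nat.add_sub_cancel] at hs
        rcases hs.2 with ⟨_, hy⟩ | ⟨hx, _⟩
        · exact absurd hiE hy
        · exact hx
      · exact Or.inr ⟨hD1, hiE⟩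
end

section
/- Let n ≥ 1 and D ⊆ {1, …, n−1}. For i ∈ {1, …, n}, the set D_M is independent of whether i belongs to M (i.e., D_{M ∪ {i}} = D_{M ∖ {i}} for every M ⊆ {1, …, n}) if and only if either (i = 1 and 1 ∉ D) or (i ≥ 2 and i−1 ∈ D and i ∉ D). Moreover, the number of such i equals |Peak(D)| + 1. -/
lemma steps (f : ℕ → Bool) (hf0 : f 0 = true) (n : ℕ) :
    ((Finset.Icc 1 n).filter (fun i => f (i-1) = true ∧ f i = false)).card =
    ((Finset.Icc 1 n).filter (fun i => f (i-1) = false ∧ f i = true)).card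
      + (if f n = true then 0 else 1) := by
  induction n with
  | zero => simp [hf0]
  | succ n ih =>
    have hins : Finset.Icc 1 (n+1) = insert (n+1) (Finset.Icc 1 n) := by
      ext x; simp [Finset.mem_Icc]; omega
    have hnot : (n+1) ∉ Finset.Icc 1 n := by simp
    rw [hins, Finset.filter_insert, Finset.filter_insert]
    have h1 : n + 1 - 1 = n := rfl
    by_cases ha : f n = true <;> by_cases hb : f (n+1) = true <;>
      simp only [h1, ha, hb, if_true, if_false, Bool.not_eq_true] at ih ⊢ <;>
      simp [Finset.card_insert_of_notMem,
        fun p => (fun h => hnot (Finset.mem_filter.mp h).1 :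
          (n+1) ∉ (Finset.Icc 1 n).filter p), ha, hb, ih]

/-- For `D ⊆ {1, …, n-1}` and `i ∈ {1, …, n}`: `D_M` is independent of
whether `i` belongs to `M` iff either (`i = 1` and `1 ∉ D`) or (`i ≥ 2`, `i - 1 ∈ D` and
`i ∉ D`); moreover the number of such `i` is `|Peak(D)| + 1`. -/
theorem stmt16 (n : ℕ) (hn : 1 ≤ n) (D : Finset ℕ) (hD : D ⊆ Finset.Icc 1 (n - 1)) :
    (∀ i ∈ Finset.Icc 1 n,
      ((∀ M ⊆ Finset.Icc 1 n, descMark n D (insert i M) = descMark n D (M.erase i)) ↔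
        ((i = 1 ∧ 1 ∉ D) ∨ (2 ≤ i ∧ i - 1 ∈ D ∧ i ∉ D)))) ∧
    ((Finset.Icc 1 n).filter
        (fun i => (i = 1 ∧ 1 ∉ D) ∨ (2 ≤ i ∧ i - 1 ∈ D ∧ i ∉ D))).card
      = (peak D).card + 1 := by
  constructor
  · intro i hi
    rw [Finset.mem_Icc] at hi
    constructor
    · intro h
      have hiD : i ∉ D := by
        intro hiD
        have hkey := h ∅ (by simp)
        have hmem : i ∈ descMark n D ((∅ : Finset ℕ).erase i) := by
          simp only [descMark, Finset.mem_filter]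
          exact ⟨hD hiD, Or.inl ⟨hiD, by simp⟩⟩
        rw [← hkey] at hmem
        simp [descMark] at hmem
      have hprev : i = 1 ∨ i - 1 ∈ D := by
        by_contra hcon
        push_neg at hcon
        obtain ⟨h1, h2⟩ := hcon
        have hi2 : 2 ≤ i := by omega
        have hkey := h ∅ (by simp)
        have hmem : i - 1 ∈ descMark n D (insert i ∅) := by
          simp only [descMark, Finset.mem_filter, Finset.mem_Icc]
          refine ⟨⟨by omega, by omega⟩, Or.inr ⟨h2, ?_⟩⟩
          have : i - 1 + 1 = i := by omega
          rw [this]; simp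
        rw [hkey] at hmem
        simp [descMark] at hmem
        tauto
      rcases hprev with h1 | h2
      · exact Or.inl ⟨h1, h1 ▸ hiD⟩
      · have : 2 ≤ i := by
          by_contra hlt
          have hi1 : i = 1 := by omega
          subst hi1
          have := Finset.mem_Icc.mp (hD h2)
          omega
        exact Or.inr ⟨this, h2, hiD⟩
    · intro hc M hM
      have hiD : i ∉ D := by rcases hc with ⟨h1, h2⟩ | ⟨_, _, h3⟩ <;> [exact h1 ▸ h2; exact h3]
      unfold descMark
      apply Finset.filter_congr
      intro j hj
      rw [Finset.mem_Icc] at hj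
      simp only [Finset.mem_insert, Finset.mem_erase]
      by_cases hji : j = i
      · subst hji
        have hne : j + 1 ≠ j := by omega
        constructor
        · rintro (⟨hjD, _⟩ | ⟨hjD, (h | h)⟩)
          · exact absurd hjD hiD
          · exact absurd h hne
          · exact Or.inr ⟨hjD, hne, h⟩
        · rintro (⟨hjD, _⟩ | ⟨hjD, _, h⟩)
          · exact absurd hjD hiD
          · exact Or.inr ⟨hjD, Or.inr h⟩
      · by_cases hji' : j + 1 = i
        · have hjD : j ∈ D := by
            rcases hc with ⟨h1, _⟩ | ⟨_, h2, _⟩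
            · omega
            · have : i - 1 = j := by omega
              exact this ▸ h2
          constructor
          · rintro (⟨_, hm⟩ | ⟨h, _⟩)
            · exact Or.inl ⟨hjD, fun ⟨_, hm'⟩ => hm (Or.inr hm')⟩
            · exact absurd hjD h
          · rintro (⟨_, hm⟩ | ⟨h, _⟩)
            · exact Or.inl ⟨hjD, fun h' => by rcases h' with h' | h' <;> [exact hji h'; exact hm ⟨hji, h'⟩]⟩
            · exact absurd hjD h
        · constructor
          · rintro (⟨h1, h2⟩ | ⟨h1, (h2 | h2)⟩)
            · exact Or.inl ⟨h1, fun ⟨_, hm⟩ => h2 (Or.inr hm)⟩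
            · exact absurd h2 hji'
            · exact Or.inr ⟨h1, hji', h2⟩
          · rintro (⟨h1, h2⟩ | ⟨h1, _, h2⟩)
            · exact Or.inl ⟨h1, fun h => by rcases h with h | h <;> [exact hji h; exact h2 ⟨hji, h⟩]⟩
            · exact Or.inr ⟨h1, Or.inr h2⟩
  · set f : ℕ → Bool := fun i => decide (i = 0 ∨ i ∈ D) with hf
    have hf0 : f 0 = true := by simp [hf]
    have hnD : n ∉ D := by
      intro h
      have := Finset.mem_Icc.mp (hD h)
      omega
    have hfn : f n = false := by
      simp [hf]
      exact ⟨by omega, hnD⟩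
    have hA : (Finset.Icc 1 n).filter
          (fun i => (i = 1 ∧ 1 ∉ D) ∨ (2 ≤ i ∧ i - 1 ∈ D ∧ i ∉ D))
        = (Finset.Icc 1 n).filter (fun i => f (i-1) = true ∧ f i = false) := by
      apply Finset.filter_congr
      intro i hi
      rw [Finset.mem_Icc] at hi
      simp only [hf, decide_eq_true_eq, decide_eq_false_iff_not]
      by_cases h1 : i = 1
      · subst h1; simp
      · have h2 : 2 ≤ i := by omega
        have h3 : i - 1 ≠ 0 := by omega
        have h4 : i ≠ 0 := by omega
        constructor
        · rintro (⟨h, _⟩ | ⟨_, ha, hb⟩)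
          · exact absurd h h1
          · exact ⟨Or.inr ha, fun h => by rcases h with h | h <;> [exact h4 h; exact hb h]⟩
        · rintro ⟨(h | h), hb⟩
          · exact absurd h h3
          · exact Or.inr ⟨h2, h, fun h' => hb (Or.inr h')⟩
    have hP : peak D = (Finset.Icc 1 n).filter (fun i => f (i-1) = false ∧ f i = true) := by
      ext i
      simp only [peak, Finset.mem_filter, Finset.mem_Icc, hf, decide_eq_true_eq,
        decide_eq_false_iff_not]
      constructor
      · rintro ⟨hiD, h2, hpd⟩
        have := Finset.mem_Icc.mp (hD hiD)
        refine ⟨⟨by omega, by omega⟩, ?_, Or.inr hiD⟩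
        rintro (h | h)
        · omega
        · exact hpd h
      · rintro ⟨⟨ha, hb⟩, hc, (h | h)⟩
        · omega
        · exact ⟨h, by omega, fun h' => hc (Or.inr h')⟩
    rw [hA, hP]
    rw [steps f hf0 n, hfn]
    simp
end

section
/- Let n ≥ 1 and D ⊆ {1, …, n−1}. For every E ⊆ {1, …, n−1} with Peak(D) ⊆ Spike(E), the number of subsets M ⊆ {1, …, n} with D_M = E equals 2^{|Peak(D)|+1}; that is, the map M ↦ D_M from subsets of {1,…,n} onto {E ⊆ {1,…,n−1} : Spike(E) ⊇ Peak(D)} is a 2^{|Peak(D)|+1}-to-one cover. -/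
/-! Whether `i` lies in `D_M` depends on the marking at the single position `markPos D i`, namely
`i ∈ D_M ↔ (markPos D i ∈ M ↔ i ∉ D)`. So `D_M = E` prescribes `M` on the image of `markPos D`
and leaves it free elsewhere. Two indices share a position exactly when they are `j - 1, j` for a
peak `j`, and their prescriptions then agree precisely when `j ∈ Spike(E)`. Hence there are `2 ^ k`
solutions, `k` being the number of positions outside the image; since `markPos D` is injective
on `{1, …, n - 1}` apart from the `|Peak(D)|` collisions, `k = n - (n - 1 - |Peak(D)|)`. -/

open Finset
open scoped symmDiff

namespace Finset

theorem card_filter_powerset_inter_eq {α : Type*} [DecidableEq α] {U V W : Finset α}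
    (hVU : V ⊆ U) (hWV : W ⊆ V) : #{M ∈ U.powerset | M ∩ V = W} = 2 ^ #(U \ V) := by
  rw [← card_powerset]
  refine card_nbij' (· \ V) (· ∪ W) ?_ ?_ ?_ ?_ <;> intro X hX <;>
    simp only [coe_filter, coe_powerset, mem_powerset, Set.mem_preimage, Set.mem_powerset_iff,
      coe_subset, Set.mem_ofPred_eq] at hX ⊢ <;> grind

variable {α β : Type*} [DecidableEq β] {s T : Finset α} {f : α → β}

theorem filter_mem_eq_iff_inter_image_eq {M : Finset β} (hTs : T ⊆ s)
    (hT : ∀ i ∈ s, ∀ j ∈ s, f i = f j → (i ∈ T ↔ j ∈ T)) :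
    {i ∈ s | f i ∈ M} = T ↔ M ∩ s.image f = T.image f := by
  constructor
  · rintro rfl
    ext x
    simp only [mem_inter, mem_image, mem_filter]
    grind
  · intro h
    ext i
    have hfi := congrArg (f i ∈ ·) h
    simp only [mem_inter, mem_image] at hfi
    simp only [mem_filter]
    grind

theorem card_filter_powerset_filter_mem_eq [DecidableEq α] {U : Finset β}
    (hsU : s.image f ⊆ U) (hTs : T ⊆ s) (hT : ∀ i ∈ s, ∀ j ∈ s, f i = f j → (i ∈ T ↔ j ∈ T)) :
    #{M ∈ U.powerset | {i ∈ s | f i ∈ M} = T} = 2 ^ #(U \ s.image f) := by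
  rw [filter_congr fun M _ => filter_mem_eq_iff_inter_image_eq hTs hT]
  exact card_filter_powerset_inter_eq hsU (image_subset_image hTs)

end Finset

def markPos (D : Finset ℕ) (i : ℕ) : ℕ := if i ∈ D then i else i + 1

variable {n : ℕ} {D E : Finset ℕ}

theorem descMark_eq_iff {M : Finset ℕ} (hD : D ⊆ Icc 1 (n - 1)) (hE : E ⊆ Icc 1 (n - 1)) :
    descMark n D M = E ↔ {i ∈ Icc 1 (n - 1) | markPos D i ∈ M} = D ∆ E := by
  simp only [Finset.ext_iff, descMark, mem_filter, mem_symmDiff]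
  refine forall_congr' fun i => ?_
  have := @hD i
  have := @hE i
  by_cases hi : i ∈ D <;> simp only [markPos, hi, if_true, if_false] <;> tauto

theorem image_markPos_subset : (Icc 1 (n - 1)).image (markPos D) ⊆ Icc 1 n := by
  intro x hx
  simp only [mem_image, mem_Icc, markPos] at hx ⊢
  grind

theorem add_one_mem_peak_of_markPos_eq {i j : ℕ} (hi : 1 ≤ i) (hij : i < j)
    (h : markPos D i = markPos D j) : j = i + 1 ∧ i + 1 ∈ peak D := by
  have hiD : i ∉ D := fun hiD => by
    by_cases hjD : j ∈ D <;> simp only [markPos, hiD, hjD, if_true, if_false] at h <;> omega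
  have hjD : j ∈ D := by
    by_contra hjD
    simp only [markPos, hiD, hjD, if_false] at h
    omega
  obtain rfl : j = i + 1 := by simpa [markPos, hiD, hjD] using h.symm
  exact ⟨rfl, mem_filter.2 ⟨hjD, by omega, by simpa using hiD⟩⟩

theorem mem_symmDiff_iff_of_markPos_eq (hPS : ↑(peak D) ⊆ spike E) {i j : ℕ} (hi : 1 ≤ i)
    (hj : 1 ≤ j) (h : markPos D i = markPos D j) : i ∈ D ∆ E ↔ j ∈ D ∆ E := by
  wlog hij : i < j generalizing i j
  · rcases (not_lt.1 hij).lt_or_eq with hji | rfl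
    · exact (this hj hi h.symm hji).symm
    · rfl
  obtain ⟨rfl, hpeak⟩ := add_one_mem_peak_of_markPos_eq hi hij h
  have hspike := (hPS hpeak).2
  obtain ⟨hjD, -, hiD⟩ := mem_filter.1 hpeak
  simp only [Nat.add_sub_cancel] at hspike hiD
  simp only [mem_symmDiff]
  tauto

theorem injOn_markPos_sdiff_image_peak :
    Set.InjOn (markPos D) ↑(Icc 1 (n - 1) \ (peak D).image (· - 1)) := by
  have hmerged : ∀ i j, 1 ≤ i → i < j → markPos D i = markPos D j →
      i ∈ (peak D).image (· - 1) := fun i j hi hij h => by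
    obtain ⟨rfl, hpeak⟩ := add_one_mem_peak_of_markPos_eq hi hij h
    exact mem_image.2 ⟨i + 1, hpeak, rfl⟩
  intro i hi j hj h
  simp only [coe_sdiff, Set.mem_sdiff, mem_coe, mem_Icc] at hi hj
  by_contra hne
  rcases Nat.lt_or_gt_of_ne hne with hij | hji
  · exact hi.2 (hmerged i j hi.1.1 hij h)
  · exact hj.2 (hmerged j i hj.1.1 hji h.symm)

theorem image_markPos_sdiff_image_peak (hD : D ⊆ Icc 1 (n - 1)) :
    (Icc 1 (n - 1) \ (peak D).image (· - 1)).image (markPos D)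
      = (Icc 1 (n - 1)).image (markPos D) := by
  refine (image_subset_image sdiff_subset).antisymm fun x hx => ?_
  obtain ⟨i, hi, rfl⟩ := mem_image.1 hx
  by_cases hiP : i ∈ (peak D).image (· - 1)
  · obtain ⟨j, hj, rfl⟩ := mem_image.1 hiP
    obtain ⟨hjD, hj2, hj1⟩ := mem_filter.1 hj
    have hjP : j ∉ (peak D).image (· - 1) := fun hjP => by
      obtain ⟨k, hk, rfl⟩ := mem_image.1 hjP
      exact (mem_filter.1 hk).2.2 hjD
    -- the collision `markPos D (j - 1) = j = markPos D j`
    refine mem_image.2 ⟨j, mem_sdiff.2 ⟨hD hjD, hjP⟩, ?_⟩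
    simp only [markPos, hjD, hj1, if_true, if_false]
    omega
  · exact mem_image_of_mem _ (mem_sdiff.2 ⟨hi, hiP⟩)

theorem card_image_markPos_add_card_peak (hD : D ⊆ Icc 1 (n - 1)) :
    #((Icc 1 (n - 1)).image (markPos D)) + #(peak D) = n - 1 := by
  have hPs : (peak D).image (· - 1) ⊆ Icc 1 (n - 1) := by
    intro i hi
    obtain ⟨j, hj, rfl⟩ := mem_image.1 hi
    obtain ⟨hjD, hj2, -⟩ := mem_filter.1 hj
    have := mem_Icc.1 (hD hjD)
    exact mem_Icc.2 ⟨by omega, by omega⟩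
  have hP : #((peak D).image (· - 1)) = #(peak D) :=
    card_image_of_injOn fun j hj k hk (h : j - 1 = k - 1) => by
      have := (mem_filter.1 hj).2.1
      have := (mem_filter.1 hk).2.1
      omega
  rw [← image_markPos_sdiff_image_peak hD, card_image_of_injOn injOn_markPos_sdiff_image_peak,
    card_sdiff_of_subset hPs, Nat.card_Icc, hP]
  have := hP ▸ card_le_card hPs
  simp only [Nat.card_Icc] at this
  omega

/-- For `D ⊆ {1, …, n-1}` and every `E ⊆ {1, …, n-1}` with
`Peak(D) ⊆ Spike(E)`, the number of markings `M ⊆ {1, …, n}` with `D_M = E` equals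
`2^(|Peak(D)| + 1)`: the map `M ↦ D_M` is a `2^(|Peak(D)|+1)`-to-one cover of
`{E : Spike(E) ⊇ Peak(D)}`. -/
theorem stmt17 (n : ℕ) (hn : 1 ≤ n) (D : Finset ℕ) (hD : D ⊆ Finset.Icc 1 (n - 1))
    (E : Finset ℕ) (hE : E ⊆ Finset.Icc 1 (n - 1)) (hPS : ↑(peak D) ⊆ spike E) :
    ((Finset.Icc 1 n).powerset.filter (fun M => descMark n D M = E)).card
      = 2 ^ ((peak D).card + 1) := by
  have hsymm : D ∆ E ⊆ Icc 1 (n - 1) := symmDiff_le_sup.trans (union_subset hD hE)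
  have hsat : ∀ i ∈ Icc 1 (n - 1), ∀ j ∈ Icc 1 (n - 1), markPos D i = markPos D j →
      (i ∈ D ∆ E ↔ j ∈ D ∆ E) := fun i hi j hj =>
    mem_symmDiff_iff_of_markPos_eq hPS (mem_Icc.1 hi).1 (mem_Icc.1 hj).1
  rw [filter_congr fun M _ => descMark_eq_iff hD hE,
    card_filter_powerset_filter_mem_eq image_markPos_subset hsymm hsat,
    card_sdiff_of_subset image_markPos_subset, Nat.card_Icc]
  have := card_image_markPos_add_card_peak hD
  congr 1
  omega
end

section
/- Let n ≥ 1 and let P ⊆ {1, …, n−1} contain no two consecutive integers. Then the number of subsets E ⊆ {1, …, n−1} with P ⊆ Spike(E) equals 2^{n−1−|P|}. -/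
/-- If `P ⊆ {1, …, n-1}` has no two consecutive elements, then the number
of subsets `E ⊆ {1, …, n-1}` with `P ⊆ Spike(E)` equals `2 ^ (n - 1 - |P|)`. -/
theorem stmt18 (n : ℕ) (hn : 1 ≤ n) (P : Finset ℕ) (hP : P ⊆ Finset.Icc 1 (n - 1))
    (hcons : ∀ i, ¬(i ∈ P ∧ i + 1 ∈ P)) :
    Nat.card {E : Finset ℕ // E ⊆ Finset.Icc 1 (n - 1) ∧ ↑P ⊆ spike E}
      = 2 ^ (n - 1 - P.card) := by
  classical
  set m := n - 1 with hm
  set S := Finset.Icc 1 m \ P with hS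
  have hprev : ∀ i ∈ P, i - 1 ∉ P := by
    intro i hi hi'
    have h1 : 1 ≤ i := (Finset.mem_Icc.mp (hP hi)).1
    refine hcons (i - 1) ⟨hi', ?_⟩
    have : i - 1 + 1 = i := Nat.sub_add_cancel h1
    rw [this]; exact hi
  have hSP : ∀ x ∈ S, x ∉ P := fun x hx => (Finset.mem_sdiff.mp hx).2
  have e : {E : Finset ℕ // E ⊆ Finset.Icc 1 m ∧ ↑P ⊆ spike E} ≃
      {F : Finset ℕ // F ∈ S.powerset} :=
    { toFun := fun E => ⟨E.1 \ P, by
        rw [Finset.mem_powerset]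
        intro x hx
        rw [Finset.mem_sdiff] at hx ⊢
        exact ⟨E.2.1 hx.1, hx.2⟩⟩
      invFun := fun F => ⟨F.1 ∪ P.filter (fun i => i - 1 ∉ F.1), by
        have hF : F.1 ⊆ S := Finset.mem_powerset.mp F.2
        constructor
        · intro x hx
          rcases Finset.mem_union.mp hx with h | h
          · exact (Finset.mem_sdiff.mp (hF h)).1
          · exact hP (Finset.mem_filter.mp h).1
        · intro i hi
          simp only [Finset.coe_sdiff, Set.mem_diff, Finset.mem_coe] at hi
          have hiP : i ∈ P := hi
          have h1 : 1 ≤ i := (Finset.mem_Icc.mp (hP hiP)).1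
          have hiF : i ∉ F.1 := fun h => hSP i (hF h) hiP
          have hi1P : i - 1 ∉ P := hprev i hiP
          refine ⟨h1, ?_⟩
          by_cases hc : i - 1 ∈ F.1
          · refine Or.inr ⟨?_, Finset.mem_union_left _ hc⟩
            intro h
            rcases Finset.mem_union.mp h with h | h
            · exact hiF h
            · exact (Finset.mem_filter.mp h).2 hc
          · refine Or.inl ⟨Finset.mem_union_right _ (Finset.mem_filter.mpr ⟨hiP, hc⟩), ?_⟩
            intro h
            rcases Finset.mem_union.mp h with h | h
            · exact hc h
            · exact hi1P (Finset.mem_filter.mp h).1⟩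
      left_inv := by
        rintro ⟨E, hE, hsp⟩
        apply Subtype.ext
        ext x
        simp only [Finset.mem_union, Finset.mem_filter, Finset.mem_sdiff]
        by_cases hx : x ∈ P
        · have hspx := hsp (Finset.mem_coe.mpr hx)
          simp only [spike, Set.mem_setOf_eq] at hspx
          have h1P : x - 1 ∉ P := hprev x hx
          tauto
        · tauto
      right_inv := by
        rintro ⟨F, hF⟩
        have hF' : F ⊆ S := Finset.mem_powerset.mp hF
        apply Subtype.ext
        ext x
        simp only [Finset.mem_sdiff, Finset.mem_union, Finset.mem_filter]
        have := fun h => hSP x (hF' h)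
        tauto }
  rw [Nat.card_congr e, Nat.card_eq_finsetCard, Finset.card_powerset]
  congr 1
  rw [hS, Finset.card_sdiff_of_subset hP, Nat.card_Icc]
  omega
end
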